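/- arXiv:1502.07452 — 4 statements merged into one kernel-verified Lean document; each statement's English description precedes it below -/
import Mathlib

section
/- Let 1 < p < ∞ and 0 < β < p/(p−1). Fix N ∈ ℕ and j ∈ {1, …, N}, and define ρ_j : ℝ^N → L^p([0,∞), ℝ) by ρ_j(r) = 0 if r_j = 0, and ρ_j(r) = χ_j · r_j |r_j|^{−β} otherwise, where χ_j is the characteristic function of the interval [|r_{j−1}|^β, |r_{j−1}|^β + |r_j|^β] (with the convention r_0 = 0). Then ρ_j is a continuous map from ℝ^N to L^p([0,∞), ℝ). -/
open MeasureTheory Set Filter Topology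
open scoped ENNReal

/-! In `L^p([0,∞))` the indicator of `[a, b]` is `1_{(-∞, b]} - 1_{(-∞, a]}`, and
`x ↦ 1_{(-∞, x]}` is `1/p`-Hölder, so `ρ_j` is continuous wherever `r_j ≠ 0`. Near `r_j = 0`
the norm of `ρ_j(r)` is at most `|r_j| · |r_j|^{-β} · |r_j|^{β/p} = |r_j|^{1 - β(1 - 1/p)}`,
and `β < p/(p-1)` says exactly that this exponent is positive. -/

noncomputable section

local notation "μ₊" => volume.restrict (Ici (0:ℝ))

namespace HalfLineLp

lemma measure_Iic_ne_top (x : ℝ) : μ₊ (Iic x) ≠ ∞ := by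
  rw [Measure.restrict_apply measurableSet_Iic, inter_comm, Ici_inter_Iic]
  simp [Real.volume_Icc]

lemma measure_Ioc_le (x y : ℝ) : μ₊ (Ioc x y) ≤ ENNReal.ofReal (y - x) := by
  rw [Measure.restrict_apply measurableSet_Ioc, ← Real.volume_Ioc]
  exact measure_mono inter_subset_left

lemma measure_Ioc_ne_top (x y : ℝ) : μ₊ (Ioc x y) ≠ ∞ :=
  ne_top_of_le_ne_top ENNReal.ofReal_ne_top (measure_Ioc_le x y)

variable {p : ℝ≥0∞}

def indicatorIicLp (p : ℝ≥0∞) (x : ℝ) : Lp ℝ p μ₊ :=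
  indicatorConstLp p measurableSet_Iic (measure_Iic_ne_top x) 1

lemma indicatorIicLp_sub_of_le {x y : ℝ} (hxy : x ≤ y) :
    indicatorIicLp p y - indicatorIicLp p x =
      indicatorConstLp p measurableSet_Ioc (measure_Ioc_ne_top x y) 1 := by
  rw [sub_eq_iff_eq_add', indicatorIicLp, indicatorIicLp,
    ← indicatorConstLp_disjoint_union _ _ _ _ (Iic_disjoint_Ioc le_rfl)]
  simp_rw [Iic_union_Ioc_eq_Iic hxy]

lemma norm_indicatorIicLp_sub_le [Fact (1 ≤ p)] (hp : p ≠ ∞) (x y : ℝ) :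
    ‖indicatorIicLp p y - indicatorIicLp p x‖ ≤ |y - x| ^ p.toReal⁻¹ := by
  wlog hxy : x ≤ y generalizing x y
  · rw [norm_sub_rev, abs_sub_comm]
    exact this y x (le_of_not_ge hxy)
  have hp0 : p ≠ 0 := (zero_lt_one.trans_le Fact.out).ne'
  rw [indicatorIicLp_sub_of_le hxy, norm_indicatorConstLp hp0 hp, norm_one, one_mul, one_div,
    abs_of_nonneg (sub_nonneg.2 hxy)]
  gcongr
  exact ENNReal.toReal_le_of_le_ofReal (sub_nonneg.2 hxy) (measure_Ioc_le x y)

lemma continuous_indicatorIicLp [Fact (1 ≤ p)] (hp : p ≠ ∞) :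
    Continuous (indicatorIicLp p) := by
  have hp' : 0 < p.toReal⁻¹ :=
    inv_pos.2 (ENNReal.toReal_pos (zero_lt_one.trans_le Fact.out).ne' hp)
  refine continuous_iff_continuousAt.2 fun x => tendsto_iff_norm_sub_tendsto_zero.2 ?_
  refine squeeze_zero (fun _ => norm_nonneg _) (fun y => norm_indicatorIicLp_sub_le hp x y) ?_
  simpa [Real.zero_rpow hp'.ne'] using
    (((continuous_sub_right x).abs.rpow_const fun _ => Or.inr hp'.le).tendsto x)

def barLp (p : ℝ≥0∞) (β a u : ℝ) : Lp ℝ p μ₊ :=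
  (u * |u| ^ (-β)) • (indicatorIicLp p (a + |u| ^ β) - indicatorIicLp p a)

lemma norm_barLp_le [Fact (1 ≤ p)] (hp : p ≠ ∞) (β a u : ℝ) :
    ‖barLp p β a u‖ ≤ |u| ^ (1 - β * (1 - p.toReal⁻¹)) := by
  rcases eq_or_ne u 0 with rfl | hu
  · simp only [barLp, zero_mul, zero_smul, norm_zero]
    positivity
  have hu' : 0 < |u| := abs_pos.2 hu
  calc ‖barLp p β a u‖
      ≤ |u| * |u| ^ (-β) * (|u| ^ β) ^ p.toReal⁻¹ := by
        rw [barLp, norm_smul, Real.norm_eq_abs, abs_mul,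
          abs_of_nonneg (Real.rpow_nonneg (abs_nonneg u) _)]
        gcongr
        simpa [abs_of_nonneg (Real.rpow_nonneg (abs_nonneg u) β)] using
          norm_indicatorIicLp_sub_le hp a (a + |u| ^ β)
    _ = |u| ^ (1 + -β + β * p.toReal⁻¹) := by
        rw [Real.rpow_add hu', Real.rpow_add hu', Real.rpow_one, Real.rpow_mul hu'.le]
    _ = |u| ^ (1 - β * (1 - p.toReal⁻¹)) := by ring_nf

lemma continuous_barLp [Fact (1 ≤ p)] (hp : p ≠ ∞) {β : ℝ}
    (hβ : β * (1 - p.toReal⁻¹) < 1) :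
    Continuous fun q : ℝ × ℝ => barLp p β q.1 q.2 := by
  refine continuous_iff_continuousAt.2 fun ⟨a, u⟩ => ?_
  rcases eq_or_ne u 0 with rfl | hu
  · have h0 : barLp p β a 0 = 0 := by simp [barLp]
    rw [ContinuousAt, h0, tendsto_zero_iff_norm_tendsto_zero]
    refine squeeze_zero (fun _ => norm_nonneg _) (fun q => norm_barLp_le hp β q.1 q.2) ?_
    have hγ : 0 < 1 - β * (1 - p.toReal⁻¹) := by linarith
    simpa [Real.zero_rpow hγ.ne'] using
      ((continuous_snd.abs.rpow_const fun _ => Or.inr hγ.le).tendsto (a, (0:ℝ)))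
  · have hF := continuous_indicatorIicLp hp
    have habs : ContinuousAt (fun q : ℝ × ℝ => |q.2|) (a, u) := continuous_snd.abs.continuousAt
    have hu' : |u| ≠ 0 := abs_ne_zero.2 hu
    exact (continuous_snd.continuousAt.mul (habs.rpow_const (Or.inl hu'))).smul
      ((hF.continuousAt.comp (continuousAt_fst.add (habs.rpow_const (Or.inl hu')))).sub
        (hF.continuousAt.comp continuousAt_fst))

lemma barLp_ae_eq (p : ℝ≥0∞) (β a u : ℝ) :
    barLp p β a u =ᵐ[μ₊] fun t =>
      if u = 0 then 0 else (Icc a (a + |u| ^ β)).indicator (fun _ => u * |u| ^ (-β)) t := by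
  rcases eq_or_ne u 0 with rfl | hu
  · simp only [barLp, zero_mul, zero_smul, if_true]
    exact Lp.coeFn_zero ℝ p μ₊
  have hb : a ≤ a + |u| ^ β := le_add_of_nonneg_right (Real.rpow_nonneg (abs_nonneg u) β)
  rw [barLp, indicatorIicLp_sub_of_le hb]
  have hμ := measure_Ioc_ne_top a (a + |u| ^ β)
  filter_upwards
    [Lp.coeFn_smul (u * |u| ^ (-β)) (indicatorConstLp p measurableSet_Ioc hμ (1:ℝ)),
    indicatorConstLp_coeFn (p := p) (c := (1:ℝ)) (hμs := hμ),
    indicator_ae_eq_of_ae_eq_set (f := fun _ : ℝ => u * |u| ^ (-β)) Ioc_ae_eq_Icc]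
    with t hsmul hind hIcc
  rw [hsmul, Pi.smul_apply, hind, if_neg hu, ← hIcc, ← indicator_const_smul_apply]
  simp only [smul_eq_mul, mul_one]

end HalfLineLp

open HalfLineLp

theorem stmt0_general (p β : ℝ) [Fact (1 ≤ ENNReal.ofReal p)]
    (hβ0 : 0 < β) (hβ : β < p / (p - 1))
    (N : ℕ) (j : Fin N) :
    ∃ ρ : EuclideanSpace ℝ (Fin N) →
        Lp ℝ (ENNReal.ofReal p) (volume.restrict (Set.Ici (0:ℝ))),
      Continuous ρ ∧
      ∀ r : EuclideanSpace ℝ (Fin N),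
        (ρ r : ℝ → ℝ) =ᵐ[volume.restrict (Set.Ici (0:ℝ))]
          (fun t : ℝ =>
            if r j = 0 then 0
            else
              Set.indicator
                (Set.Icc
                  ((if h : (j : ℕ) = 0 then (0:ℝ)
                    else |r ⟨(j : ℕ) - 1, lt_of_le_of_lt (Nat.sub_le _ _) j.isLt⟩|) ^ β)
                  ((if h : (j : ℕ) = 0 then (0:ℝ)
                    else |r ⟨(j : ℕ) - 1, lt_of_le_of_lt (Nat.sub_le _ _) j.isLt⟩|) ^ β
                    + |r j| ^ β))
                (fun _ => r j * |r j| ^ (-β)) t) := by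
  have hp : 1 ≤ p := ENNReal.one_le_ofReal.1 Fact.out
  have hexp : β * (1 - (ENNReal.ofReal p).toReal⁻¹) < 1 := by
    rw [ENNReal.toReal_ofReal (by linarith)]
    rcases hp.eq_or_lt with rfl | hp
    · simp
    · rw [lt_div_iff₀ (by linarith)] at hβ
      rwa [show β * (1 - p⁻¹) = β * (p - 1) / p by field_simp, div_lt_one (by linarith)]
  have ha : Continuous fun r : EuclideanSpace ℝ (Fin N) =>
      (if _h : (j : ℕ) = 0 then (0:ℝ)
        else |r ⟨(j : ℕ) - 1, lt_of_le_of_lt (Nat.sub_le _ _) j.isLt⟩|) ^ β := by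
    by_cases h0 : (j : ℕ) = 0
    · simp only [h0, dite_true]
      exact continuous_const
    · simp only [h0, dite_false]
      exact ((EuclideanSpace.proj _).continuous.abs).rpow_const fun _ => Or.inr hβ0.le
  exact ⟨_, (continuous_barLp ENNReal.ofReal_ne_top hexp).comp
    (ha.prodMk (EuclideanSpace.proj j).continuous), fun r => barLp_ae_eq _ β _ _⟩

/-- continuity of the maps `ρ_j` from Lemma `lemma:phi`.
For `r ∈ ℝ^N` (coordinates `r 0, …, r (N-1)`, with the paper's convention that the
coordinate preceding the first one is `0`), the map sending `r` to the element of
`L^p([0,∞),ℝ)` given by `0` if `r j = 0` and otherwise by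
`χ_j · r_j |r_j|^{-β}`, where `χ_j` is the characteristic function of the interval
`[|r_{j-1}|^β, |r_{j-1}|^β + |r_j|^β]`, is continuous. -/
theorem stmt0 (p β : ℝ) (hp : 1 < p) [Fact (1 ≤ ENNReal.ofReal p)]
    (hβ0 : 0 < β) (hβ : β < p / (p - 1))
    (N : ℕ) (j : Fin N) :
    ∃ ρ : EuclideanSpace ℝ (Fin N) →
        Lp ℝ (ENNReal.ofReal p) (volume.restrict (Set.Ici (0:ℝ))),
      Continuous ρ ∧
      ∀ r : EuclideanSpace ℝ (Fin N),
        (ρ r : ℝ → ℝ) =ᵐ[volume.restrict (Set.Ici (0:ℝ))]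
          (fun t : ℝ =>
            if r j = 0 then 0
            else
              Set.indicator
                (Set.Icc
                  ((if h : (j : ℕ) = 0 then (0:ℝ)
                    else |r ⟨(j : ℕ) - 1, lt_of_le_of_lt (Nat.sub_le _ _) j.isLt⟩|) ^ β)
                  ((if h : (j : ℕ) = 0 then (0:ℝ)
                    else |r ⟨(j : ℕ) - 1, lt_of_le_of_lt (Nat.sub_le _ _) j.isLt⟩|) ^ β
                    + |r j| ^ β))
                (fun _ => r j * |r j| ^ (-β)) t) :=
  stmt0_general p β hβ0 hβ N j
end
end

section
/- Let 1 ≤ p < ∞. The map 𝒞 : L^p([0,1], ℝ) × L^p([0,∞), ℝ) × [0,∞) → L^p([0,1], ℝ), defined by 𝒞(u, v, T)(t) = (T+1)·u(t(T+1)) for 0 ≤ t < 1/(T+1) and 𝒞(u, v, T)(t) = (T+1)·v((T+1)t − 1) for 1/(T+1) < t ≤ 1, is continuous (with respect to the product of the L^p norm topologies and the standard topology on [0,∞)). -/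
/-!
Let `w(u, v)` be `u` on `[0, 1]` followed by `v(· - 1)` on `[1, ∞)`, and `D_a F = a F(a ·)`; then
`𝒞(u, v, T) = D_{T+1} (w(u, v))` on `[0, 1]`. The map `w` is linear and bounded, and the
substitution `s = a t` gives `‖D_a F‖ ≤ a ‖F‖` for `a ≥ 1`. Hence the increment of `𝒞` is at most
`a (‖u - u₀‖ + ‖v - v₀‖) + ‖D_a F₀ - D_{a₀} F₀‖` with `F₀ = w(u₀, v₀)`. The last term tends to `0`
as `a → a₀`: uniformly on `[0, 1]` when `F₀` is continuous, and in general by density, since the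
`D_a` are uniformly bounded near `a₀`.
-/

open MeasureTheory Set ENNReal Filter Topology

namespace RescaledConcat

variable {q : ℝ≥0∞}

-- Both indicators see `s = 1`; this null set does not matter.
noncomputable def concat (f g : ℝ → ℝ) : ℝ → ℝ :=
  (Icc 0 1).indicator f + (Ici 1).indicator fun s => g (s - 1)

def dilate (a : ℝ) (F : ℝ → ℝ) (t : ℝ) : ℝ := a * F (a * t)

lemma concat_sub (f g f' g' : ℝ → ℝ) :
    concat f g - concat f' g' = concat (f - f') (g - g') := by
  funext s
  simp only [concat, Pi.sub_apply, Pi.add_apply, indicator_apply]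
  split_ifs <;> ring

lemma dilate_sub (a : ℝ) (F G : ℝ → ℝ) : dilate a F - dilate a G = dilate a (F - G) := by
  funext t
  simp only [dilate, Pi.sub_apply]
  ring

section Concat

variable {f g : ℝ → ℝ}

lemma measurePreserving_sub_one_Ici :
    MeasurePreserving (fun s : ℝ => s - 1) (volume.restrict (Ici 1)) (volume.restrict (Ici 0)) := by
  simpa using (measurePreserving_sub_right volume (1 : ℝ)).restrict_preimage
    (measurableSet_Ici (a := 0))

lemma aestronglyMeasurable_concat (hf : AEStronglyMeasurable f (volume.restrict (Icc 0 1)))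
    (hg : AEStronglyMeasurable g (volume.restrict (Ici 0))) :
    AEStronglyMeasurable (concat f g) volume :=
  ((aestronglyMeasurable_indicator_iff measurableSet_Icc).2 hf).add
    ((aestronglyMeasurable_indicator_iff measurableSet_Ici).2
      (hg.comp_measurePreserving measurePreserving_sub_one_Ici))

lemma eLpNorm_concat_le (hq : 1 ≤ q) (hf : AEStronglyMeasurable f (volume.restrict (Icc 0 1)))
    (hg : AEStronglyMeasurable g (volume.restrict (Ici 0))) :
    eLpNorm (concat f g) q volume ≤
      eLpNorm f q (volume.restrict (Icc 0 1)) + eLpNorm g q (volume.restrict (Ici 0)) := by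
  have hg' := hg.comp_measurePreserving measurePreserving_sub_one_Ici
  refine (eLpNorm_add_le ((aestronglyMeasurable_indicator_iff measurableSet_Icc).2 hf)
    ((aestronglyMeasurable_indicator_iff measurableSet_Ici).2 hg') hq).trans_eq ?_
  rw [eLpNorm_indicator_eq_eLpNorm_restrict measurableSet_Icc,
    eLpNorm_indicator_eq_eLpNorm_restrict measurableSet_Ici,
    eLpNorm_comp_measurePreserving hg measurePreserving_sub_one_Ici]

lemma memLp_concat (hq : 1 ≤ q) (hf : MemLp f q (volume.restrict (Icc 0 1)))
    (hg : MemLp g q (volume.restrict (Ici 0))) : MemLp (concat f g) q volume :=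
  ⟨aestronglyMeasurable_concat hf.1 hg.1,
    (eLpNorm_concat_le hq hf.1 hg.1).trans_lt (ENNReal.add_lt_top.2 ⟨hf.2, hg.2⟩)⟩

end Concat

section Dilate

variable {a : ℝ} {F : ℝ → ℝ}

lemma measurePreserving_mul_left_smul_volume (ha : 0 < a) :
    MeasurePreserving (a * ·) (ENNReal.ofReal a • volume) volume := by
  refine ⟨measurable_const_mul a, ?_⟩
  rw [Measure.map_smul, Real.map_volume_mul_left ha.ne', smul_smul, abs_of_pos (inv_pos.2 ha),
    ← ENNReal.ofReal_mul ha.le, mul_inv_cancel₀ ha.ne', ENNReal.ofReal_one, one_smul]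

lemma aestronglyMeasurable_dilate (a : ℝ) (hF : AEStronglyMeasurable F volume) :
    AEStronglyMeasurable (dilate a F) volume := by
  rcases eq_or_ne a 0 with rfl | ha
  · rw [show dilate 0 F = fun _ => 0 from funext fun t => zero_mul _]
    exact aestronglyMeasurable_const
  exact (hF.comp_quasiMeasurePreserving (Measure.quasiMeasurePreserving_smul volume ha)).const_smul
    a

lemma eLpNorm_dilate_le (ha : 1 ≤ a) (hF : AEStronglyMeasurable F volume) (s : Set ℝ) :
    eLpNorm (dilate a F) q (volume.restrict s) ≤ ENNReal.ofReal a * eLpNorm F q volume := by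
  have ha₀ : 0 < a := zero_lt_one.trans_le ha
  have hle : volume.restrict s ≤ ENNReal.ofReal a • volume :=
    Measure.restrict_le_self.trans <| by
      simpa using IsOrderedSMul.smul_le_smul_right _ _ (ENNReal.one_le_ofReal.2 ha) volume
  have hcomp : eLpNorm (F ∘ (a * ·)) q (volume.restrict s) ≤ eLpNorm F q volume :=
    (eLpNorm_mono_measure _ hle).trans_eq
      (eLpNorm_comp_measurePreserving hF (measurePreserving_mul_left_smul_volume ha₀))
  calc eLpNorm (dilate a F) q (volume.restrict s)
      = ‖a‖ₑ * eLpNorm (F ∘ (a * ·)) q (volume.restrict s) := eLpNorm_const_smul a _ q _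
    _ ≤ ENNReal.ofReal a * eLpNorm F q volume := by
      rw [Real.enorm_eq_ofReal ha₀.le]
      gcongr

lemma memLp_dilate (ha : 1 ≤ a) (hF : MemLp F q volume) (s : Set ℝ) :
    MemLp (dilate a F) q (volume.restrict s) :=
  ⟨(aestronglyMeasurable_dilate a hF.1).restrict,
    (eLpNorm_dilate_le ha hF.1 s).trans_lt (ENNReal.mul_lt_top ENNReal.ofReal_lt_top hF.2)⟩

end Dilate

lemma tendsto_eLpNorm_dilate_sub_of_continuous {φ : ℝ → ℝ} (hφ : Continuous φ) (a₀ : ℝ) :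
    Tendsto (fun a => eLpNorm (dilate a φ - dilate a₀ φ) q (volume.restrict (Icc 0 1)))
      (𝓝 a₀) (𝓝 0) := by
  rw [ENNReal.tendsto_nhds_zero]
  intro ε hε
  rcases eq_or_ne ε ∞ with rfl | hε_top
  · exact Eventually.of_forall fun _ => le_top
  have hη : 0 < ε.toReal := ENNReal.toReal_pos hε.ne' hε_top
  have hcont : ContinuousOn (Function.uncurry fun a => dilate a φ) (univ ×ˢ Icc 0 1) :=
    (show Continuous fun p : ℝ × ℝ => p.1 * φ (p.1 * p.2) by fun_prop).continuousOn
  obtain ⟨V, hV, hVunif⟩ := isCompact_Icc.mem_uniformity_of_prod hcont (mem_univ a₀)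
    (Metric.dist_mem_uniformity hη)
  rw [nhdsWithin_univ] at hV
  filter_upwards [hV] with a ha
  have hbound : ∀ᵐ t ∂volume.restrict (Icc (0 : ℝ) 1),
      ‖(dilate a φ - dilate a₀ φ) t‖ ≤ ε.toReal := by
    filter_upwards [ae_restrict_mem measurableSet_Icc] with t ht
    exact (hVunif a ha t ht).le
  refine (eLpNorm_le_of_ae_bound hbound).trans_eq ?_
  simp [ENNReal.ofReal_toReal hε_top]

lemma eLpNorm_dilate_sub_le_of_approx (hq : 1 ≤ q) {a a₀ : ℝ} (ha : 1 ≤ a) (ha₀ : 1 ≤ a₀)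
    {F φ : ℝ → ℝ} (hF : AEStronglyMeasurable F volume) (hφ : AEStronglyMeasurable φ volume) :
    eLpNorm (dilate a F - dilate a₀ F) q (volume.restrict (Icc 0 1)) ≤
      ENNReal.ofReal a * eLpNorm (F - φ) q volume + ENNReal.ofReal a₀ * eLpNorm (F - φ) q volume +
        eLpNorm (dilate a φ - dilate a₀ φ) q (volume.restrict (Icc 0 1)) := by
  have hdecomp : dilate a F - dilate a₀ F =
      (dilate a (F - φ) - dilate a₀ (F - φ)) + (dilate a φ - dilate a₀ φ) := by
    rw [← dilate_sub, ← dilate_sub]; abel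
  have hm : ∀ b {G : ℝ → ℝ}, AEStronglyMeasurable G volume →
      AEStronglyMeasurable (dilate b G) (volume.restrict (Icc 0 1)) := fun b {_} hG =>
    (aestronglyMeasurable_dilate b hG).restrict
  rw [hdecomp]
  refine (eLpNorm_add_le ((hm a (hF.sub hφ)).sub (hm a₀ (hF.sub hφ)))
    ((hm a hφ).sub (hm a₀ hφ)) hq).trans (add_le_add_left ?_ _)
  exact (eLpNorm_sub_le (hm a (hF.sub hφ)) (hm a₀ (hF.sub hφ)) hq).trans
    (add_le_add (eLpNorm_dilate_le ha (hF.sub hφ) _) (eLpNorm_dilate_le ha₀ (hF.sub hφ) _))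

lemma tendsto_eLpNorm_dilate_sub (hq : 1 ≤ q) (hq_top : q ≠ ∞) {F : ℝ → ℝ}
    (hF : MemLp F q volume) {a₀ : ℝ} (ha₀ : 1 ≤ a₀) :
    Tendsto (fun a => eLpNorm (dilate a F - dilate a₀ F) q (volume.restrict (Icc 0 1)))
      (𝓝[Ici 1] a₀) (𝓝 0) := by
  rw [ENNReal.tendsto_nhds_zero]
  intro ε hε
  have hε3 : 0 < ε / 3 := ENNReal.div_pos hε.ne' (by norm_num)
  -- `a₀ + 1` bounds the norms of the `D_a` that occur below
  obtain ⟨φ, -, hFφ, hφ, -⟩ := hF.exists_hasCompactSupport_eLpNorm_sub_le hq_top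
    (ENNReal.div_pos hε3.ne' (ENNReal.ofReal_ne_top (r := a₀ + 1))).ne'
  have hM : ∀ b ≤ a₀ + 1, ENNReal.ofReal b * eLpNorm (F - φ) q volume ≤ ε / 3 := fun b hb =>
    (mul_le_mul' (ENNReal.ofReal_le_ofReal hb) hFφ).trans ENNReal.mul_div_le
  have hφ_lim := (tendsto_order.1 (tendsto_eLpNorm_dilate_sub_of_continuous (q := q) hφ a₀)).2
    (ε / 3) hε3
  filter_upwards [self_mem_nhdsWithin, nhdsWithin_le_nhds (Iio_mem_nhds (lt_add_one a₀)),
    nhdsWithin_le_nhds hφ_lim] with a (ha : 1 ≤ a) (haM : a < a₀ + 1) hφa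
  calc eLpNorm (dilate a F - dilate a₀ F) q (volume.restrict (Icc 0 1))
      ≤ ENNReal.ofReal a * eLpNorm (F - φ) q volume +
          ENNReal.ofReal a₀ * eLpNorm (F - φ) q volume +
          eLpNorm (dilate a φ - dilate a₀ φ) q (volume.restrict (Icc 0 1)) :=
        eLpNorm_dilate_sub_le_of_approx hq ha ha₀ hF.1 hφ.aestronglyMeasurable
    _ ≤ ε / 3 + ε / 3 + ε / 3 :=
        add_le_add (add_le_add (hM a haM.le) (hM a₀ (by linarith))) hφa.le
    _ = ε := ENNReal.add_thirds ε


lemma eLpNorm_dilate_concat_sub_le (hq : 1 ≤ q) {a a₀ : ℝ} (ha : 1 ≤ a)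
    {f f₀ g g₀ : ℝ → ℝ} (hf : AEStronglyMeasurable f (volume.restrict (Icc 0 1)))
    (hf₀ : AEStronglyMeasurable f₀ (volume.restrict (Icc 0 1)))
    (hg : AEStronglyMeasurable g (volume.restrict (Ici 0)))
    (hg₀ : AEStronglyMeasurable g₀ (volume.restrict (Ici 0))) :
    eLpNorm (dilate a (concat f g) - dilate a₀ (concat f₀ g₀)) q (volume.restrict (Icc 0 1)) ≤
      ENNReal.ofReal a * (eLpNorm (f - f₀) q (volume.restrict (Icc 0 1)) +
          eLpNorm (g - g₀) q (volume.restrict (Ici 0))) +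
        eLpNorm (dilate a (concat f₀ g₀) - dilate a₀ (concat f₀ g₀)) q
          (volume.restrict (Icc 0 1)) := by
  have hm : ∀ b {F : ℝ → ℝ}, AEStronglyMeasurable F volume →
      AEStronglyMeasurable (dilate b F) (volume.restrict (Icc 0 1)) := fun b {_} hF =>
    (aestronglyMeasurable_dilate b hF).restrict
  have hΔ := aestronglyMeasurable_concat (hf.sub hf₀) (hg.sub hg₀)
  have hF₀ := aestronglyMeasurable_concat hf₀ hg₀
  have hdecomp : dilate a (concat f g) - dilate a₀ (concat f₀ g₀) =
      dilate a (concat (f - f₀) (g - g₀)) +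
        (dilate a (concat f₀ g₀) - dilate a₀ (concat f₀ g₀)) := by
    rw [← concat_sub, ← dilate_sub]; abel
  rw [hdecomp]
  refine (eLpNorm_add_le (hm a hΔ) ((hm a hF₀).sub (hm a₀ hF₀)) hq).trans
    (add_le_add_left ?_ _)
  exact (eLpNorm_dilate_le ha hΔ _).trans
    (mul_le_mul' le_rfl (eLpNorm_concat_le hq (hf.sub hf₀) (hg.sub hg₀)))

lemma dilate_concat_ae_eq {a : ℝ} (ha : 0 < a) (f g : ℝ → ℝ) :
    dilate a (concat f g) =ᵐ[volume.restrict (Icc 0 1)]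
      fun t => if t < 1 / a then a * f (t * a) else a * g (a * t - 1) := by
  filter_upwards [Measure.ae_ne _ (1 / a), ae_restrict_mem measurableSet_Icc]
    with t ht htI
  have ht₀ : 0 ≤ t := htI.1
  have hat₀ : 0 ≤ a * t := mul_nonneg ha.le ht₀
  simp only [dilate, concat, Pi.add_apply]
  split_ifs with hlt
  · have hat : a * t < 1 := by rwa [lt_div_iff₀ ha, mul_comm] at hlt
    rw [indicator_of_mem (show a * t ∈ Icc 0 1 from ⟨hat₀, hat.le⟩),
      indicator_of_notMem (show a * t ∉ Ici 1 from not_le.2 hat), add_zero, mul_comm t]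
  · have hat : 1 < a * t := by
      rw [← div_lt_iff₀' ha]; exact lt_of_le_of_ne (not_lt.1 hlt) (Ne.symm ht)
    rw [indicator_of_notMem fun h => not_le.2 hat h.2,
      indicator_of_mem (show a * t ∈ Ici 1 from hat.le), zero_add]

section Lp

variable [Fact (1 ≤ q)]

abbrev Domain (q : ℝ≥0∞) :=
  Lp ℝ q (volume.restrict (Icc (0:ℝ) 1)) × Lp ℝ q (volume.restrict (Ici (0:ℝ))) × {T : ℝ // 0 ≤ T}

lemma memLp_dilate_concat (u : Lp ℝ q (volume.restrict (Icc (0:ℝ) 1)))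
    (v : Lp ℝ q (volume.restrict (Ici (0:ℝ)))) {a : ℝ} (ha : 1 ≤ a) :
    MemLp (dilate a (concat u v)) q (volume.restrict (Icc (0:ℝ) 1)) :=
  memLp_dilate ha (memLp_concat Fact.out (Lp.memLp u) (Lp.memLp v)) _

noncomputable def rescaledConcat (z : Domain q) :
    Lp ℝ q (volume.restrict (Icc (0:ℝ) 1)) :=
  (memLp_dilate_concat z.1 z.2.1 (le_add_of_nonneg_left z.2.2.2)).toLp _

lemma coeFn_rescaledConcat (z : Domain q) :
    rescaledConcat z =ᵐ[volume.restrict (Icc (0:ℝ) 1)] dilate (z.2.2.1 + 1) (concat z.1 z.2.1) :=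
  MemLp.coeFn_toLp _

lemma rescaledConcat_ae_eq (u : Lp ℝ q (volume.restrict (Icc (0:ℝ) 1)))
    (v : Lp ℝ q (volume.restrict (Ici (0:ℝ)))) (T : {T : ℝ // 0 ≤ T}) :
    (rescaledConcat (u, v, T) : ℝ → ℝ) =ᵐ[volume.restrict (Icc (0:ℝ) 1)]
      fun t => if t < 1 / (T.1 + 1) then (T.1 + 1) * u (t * (T.1 + 1))
        else (T.1 + 1) * v ((T.1 + 1) * t - 1) :=
  (coeFn_rescaledConcat _).trans (dilate_concat_ae_eq (by linarith [T.2]) _ _)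

theorem continuous_rescaledConcat (hq : q ≠ ∞) :
    Continuous (rescaledConcat (q := q)) := by
  rw [continuous_iff_continuousAt]
  intro z₀
  rw [ContinuousAt, tendsto_iff_edist_tendsto_0]
  set a := fun z : Domain q => z.2.2.1 + 1
  have ha : ∀ z, 1 ≤ a z := fun z => le_add_of_nonneg_left z.2.2.2
  have hcont : Continuous a := by fun_prop
  set F₀ := concat z₀.1 z₀.2.1
  have hbound : ∀ z, edist (rescaledConcat z) (rescaledConcat z₀) ≤
      ENNReal.ofReal (a z) * (edist z.1 z₀.1 + edist z.2.1 z₀.2.1) +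
        eLpNorm (dilate (a z) F₀ - dilate (a z₀) F₀) q (volume.restrict (Icc 0 1)) := by
    intro z
    rw [Lp.edist_def, Lp.edist_def, Lp.edist_def, eLpNorm_congr_ae
      ((coeFn_rescaledConcat z).sub (coeFn_rescaledConcat z₀))]
    exact eLpNorm_dilate_concat_sub_le Fact.out (ha z) (Lp.aestronglyMeasurable _)
      (Lp.aestronglyMeasurable _) (Lp.aestronglyMeasurable _) (Lp.aestronglyMeasurable _)
  have hlin : Tendsto (fun z => ENNReal.ofReal (a z) * (edist z.1 z₀.1 + edist z.2.1 z₀.2.1))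
      (𝓝 z₀) (𝓝 0) := by
    have hedist : Tendsto (fun z : Domain q => edist z.1 z₀.1 + edist z.2.1 z₀.2.1) (𝓝 z₀)
        (𝓝 0) :=
      Continuous.tendsto' (by fun_prop) z₀ 0 (by simp)
    simpa using ENNReal.Tendsto.mul (ENNReal.tendsto_ofReal (hcont.tendsto z₀))
      (.inr zero_ne_top) hedist (.inr ofReal_ne_top)
  have hdil : Tendsto (fun z => eLpNorm (dilate (a z) F₀ - dilate (a z₀) F₀) q
      (volume.restrict (Icc 0 1))) (𝓝 z₀) (𝓝 0) := by
    refine (tendsto_eLpNorm_dilate_sub Fact.out hq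
      (memLp_concat Fact.out (Lp.memLp _) (Lp.memLp _)) (ha z₀)).comp ?_
    exact tendsto_nhdsWithin_iff.2 ⟨hcont.tendsto z₀, .of_forall ha⟩
  have hsum := hlin.add hdil
  rw [add_zero] at hsum
  exact tendsto_of_tendsto_of_tendsto_of_le_of_le tendsto_const_nhds hsum (fun _ => zero_le)
    hbound

end Lp

end RescaledConcat

open RescaledConcat

theorem stmt1_general (p : ℝ) [Fact (1 ≤ ENNReal.ofReal p)] :
    ∃ C : Lp ℝ (ENNReal.ofReal p) (volume.restrict (Set.Icc (0:ℝ) 1)) ×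
          Lp ℝ (ENNReal.ofReal p) (volume.restrict (Set.Ici (0:ℝ))) ×
          {T : ℝ // 0 ≤ T} →
          Lp ℝ (ENNReal.ofReal p) (volume.restrict (Set.Icc (0:ℝ) 1)),
      Continuous C ∧
      ∀ (u : Lp ℝ (ENNReal.ofReal p) (volume.restrict (Set.Icc (0:ℝ) 1)))
        (v : Lp ℝ (ENNReal.ofReal p) (volume.restrict (Set.Ici (0:ℝ))))
        (T : {T : ℝ // 0 ≤ T}),
        (C (u, v, T) : ℝ → ℝ) =ᵐ[volume.restrict (Set.Icc (0:ℝ) 1)]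
          fun t : ℝ =>
            if t < 1 / (T.1 + 1) then (T.1 + 1) * u (t * (T.1 + 1))
            else (T.1 + 1) * v ((T.1 + 1) * t - 1) :=
  ⟨rescaledConcat, continuous_rescaledConcat ENNReal.ofReal_ne_top, rescaledConcat_ae_eq⟩

/-- the rescaled-concatenation map
`𝒞 : L^p([0,1],ℝ) × L^p([0,∞),ℝ) × [0,∞) → L^p([0,1],ℝ)`,
`𝒞(u,v,T)(t) = (T+1)u(t(T+1))` for `0 ≤ t < 1/(T+1)` and
`𝒞(u,v,T)(t) = (T+1)v((T+1)t-1)` for `1/(T+1) < t ≤ 1`, is continuous. -/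
theorem stmt1 (p : ℝ) (hp : 1 ≤ p) [Fact (1 ≤ ENNReal.ofReal p)] :
    ∃ C : Lp ℝ (ENNReal.ofReal p) (volume.restrict (Set.Icc (0:ℝ) 1)) ×
          Lp ℝ (ENNReal.ofReal p) (volume.restrict (Set.Ici (0:ℝ))) ×
          {T : ℝ // 0 ≤ T} →
          Lp ℝ (ENNReal.ofReal p) (volume.restrict (Set.Icc (0:ℝ) 1)),
      Continuous C ∧
      ∀ (u : Lp ℝ (ENNReal.ofReal p) (volume.restrict (Set.Icc (0:ℝ) 1)))
        (v : Lp ℝ (ENNReal.ofReal p) (volume.restrict (Set.Ici (0:ℝ))))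
        (T : {T : ℝ // 0 ≤ T}),
        (C (u, v, T) : ℝ → ℝ) =ᵐ[volume.restrict (Set.Icc (0:ℝ) 1)]
          fun t : ℝ =>
            if t < 1 / (T.1 + 1) then (T.1 + 1) * u (t * (T.1 + 1))
            else (T.1 + 1) * v ((T.1 + 1) * t - 1) :=
  stmt1_general p
end

section
/- Fix n, d ∈ ℕ, 1 < p < ∞, T > 0, x ∈ ℝ^n, and smooth vector fields X_0, X_1, …, X_d : ℝ^n → ℝ^n that are bounded and have bounded first derivatives. For u ∈ L^p([0,T], ℝ^d) let γ_u denote the trajectory of u starting at x. If a sequence u_n converges weakly to u in L^p([0,T], ℝ^d), then γ_{u_n} converges to γ_u uniformly on [0,T]. -/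
open MeasureTheory Set Filter Topology
open scoped ENNReal NNReal

noncomputable section

section helpers
open scoped ENNReal NNReal

lemma bdd_of_weak {E : Type*} [NormedAddCommGroup E] [NormedSpace ℝ E]
    (u : ℕ → E) (ul : E)
    (h : ∀ φ : E →L[ℝ] ℝ, Tendsto (fun k => φ (u k)) atTop (𝓝 (φ ul))) :
    ∃ M, (∀ k, ‖u k‖ ≤ M) ∧ ‖ul‖ ≤ M ∧ 0 ≤ M := by
  set J := NormedSpace.inclusionInDoubleDualLi ℝ (E := E) with hJ
  have hbd : ∀ φ : E →L[ℝ] ℝ, ∃ C, ∀ k, ‖(J (u k)) φ‖ ≤ C := by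
    intro φ
    obtain ⟨C, hC⟩ := ((h φ).norm.bddAbove_range).exists_ge 0
    exact ⟨C, fun k => hC.2 _ ⟨k, rfl⟩⟩
  obtain ⟨C', hC'⟩ := banach_steinhaus (g := fun k => (J (u k) : _)) (fun φ => hbd φ)
  refine ⟨max C' ‖ul‖, fun k => ?_, le_max_right _ _, le_trans (norm_nonneg _) (le_max_right _ _)⟩
  calc ‖u k‖ = ‖J (u k)‖ := (J.norm_map _).symm
  _ ≤ C' := hC' k
  _ ≤ _ := le_max_left _ _

lemma integral_norm_le_of_memLp {α F : Type*} [MeasurableSpace α] [NormedAddCommGroup F]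
    {μ : Measure α} [IsFiniteMeasure μ] {p : ℝ} (hp : 1 < p) {f : α → F}
    (hf : MemLp f (ENNReal.ofReal p) μ) :
    ∫ a, ‖f a‖ ∂μ ≤ (eLpNorm f (ENNReal.ofReal p) μ).toReal * (μ univ).toReal ^ (1 - 1/p) := by
  have hp0 : (0:ℝ) < p := lt_trans one_pos hp
  have hple : (1:ℝ≥0∞) ≤ ENNReal.ofReal p := by
    rw [← ENNReal.ofReal_one]
    exact ENNReal.ofReal_le_ofReal hp.le
  have h1 : MemLp f 1 μ := hf.mono_exponent hple
  have hint : Integrable f μ := memLp_one_iff_integrable.mp h1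
  have key := eLpNorm_le_eLpNorm_mul_rpow_measure_univ hple hf.1
  have hexp : (1:ℝ)/(1:ℝ≥0∞).toReal - 1/(ENNReal.ofReal p).toReal = 1 - 1/p := by
    rw [ENNReal.toReal_ofReal hp0.le]; simp
  rw [hexp] at key
  have hfin : eLpNorm f (ENNReal.ofReal p) μ * (μ univ) ^ (1 - 1/p) ≠ ⊤ := by
    apply ENNReal.mul_ne_top hf.2.ne
    have he : (0:ℝ) ≤ 1 - 1/p := by
      rw [sub_nonneg, div_le_one hp0]; linarith
    exact (ENNReal.rpow_lt_top_of_nonneg he (measure_ne_top μ univ)).ne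
  have := ENNReal.toReal_mono hfin key
  rw [ENNReal.toReal_mul, ← ENNReal.toReal_rpow] at this
  calc ∫ a, ‖f a‖ ∂μ = (eLpNorm f 1 μ).toReal := by
        rw [integral_norm_eq_lintegral_enorm hf.1, eLpNorm_one_eq_lintegral_enorm]
  _ ≤ _ := this

lemma pairing_clm {α : Type*} [MeasurableSpace α] {μ : Measure α} [IsFiniteMeasure μ]
    {d : ℕ} {p : ℝ} (hp : 1 < p) [Fact (1 ≤ ENNReal.ofReal p)]
    (w : α → EuclideanSpace ℝ (Fin d)) (hw : AEStronglyMeasurable w μ)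
    (C : ℝ) (hC0 : 0 ≤ C) (hC : ∀ᵐ s ∂μ, ‖w s‖ ≤ C) :
    ∃ Φ : Lp (EuclideanSpace ℝ (Fin d)) (ENNReal.ofReal p) μ →L[ℝ] ℝ,
      ∀ f, Φ f = ∫ s, (inner ℝ (w s) (f s) : ℝ) ∂μ := by
  have hple : (1:ℝ≥0∞) ≤ ENNReal.ofReal p := Fact.out
  have hintf : ∀ f : Lp (EuclideanSpace ℝ (Fin d)) (ENNReal.ofReal p) μ,
      Integrable (fun s => ‖f s‖) μ :=
    fun f => (memLp_one_iff_integrable.mp ((Lp.memLp f).mono_exponent hple)).norm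
  have hint : ∀ f : Lp (EuclideanSpace ℝ (Fin d)) (ENNReal.ofReal p) μ,
      Integrable (fun s => (inner ℝ (w s) (f s) : ℝ)) μ := by
    intro f
    refine Integrable.mono' ((hintf f).const_mul C) (hw.inner (Lp.aestronglyMeasurable f)) ?_
    filter_upwards [hC] with s hs
    calc ‖(inner ℝ (w s) (f s) : ℝ)‖ ≤ ‖w s‖ * ‖f s‖ := norm_inner_le_norm _ _
    _ ≤ C * ‖f s‖ := by gcongr
  set L : Lp (EuclideanSpace ℝ (Fin d)) (ENNReal.ofReal p) μ →ₗ[ℝ] ℝ :=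
    { toFun := fun f => ∫ s, (inner ℝ (w s) (f s) : ℝ) ∂μ
      map_add' := by
        intro f g
        rw [← integral_add (hint f) (hint g)]
        refine integral_congr_ae ?_
        filter_upwards [Lp.coeFn_add f g] with s hs
        rw [hs]; simp [inner_add_right]
      map_smul' := by
        intro c f
        rw [← integral_smul]
        refine integral_congr_ae ?_
        filter_upwards [Lp.coeFn_smul c f] with s hs
        rw [hs]; simp [inner_smul_right] } with hL
  refine ⟨L.mkContinuous (C * (μ univ).toReal ^ (1 - 1/p)) ?_, fun f => rfl⟩
  intro f
  have h1 : ‖L f‖ ≤ ∫ s, C * ‖f s‖ ∂μ := by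
    rw [hL]
    refine (norm_integral_le_integral_norm _).trans ?_
    refine integral_mono_ae (hint f).norm ((hintf f).const_mul C) ?_
    filter_upwards [hC] with s hs
    calc ‖(inner ℝ (w s) (f s) : ℝ)‖ ≤ ‖w s‖ * ‖f s‖ := norm_inner_le_norm _ _
    _ ≤ C * ‖f s‖ := by gcongr
  rw [integral_const_mul] at h1
  refine h1.trans ?_
  rw [mul_comm (C * _) ‖f‖, Lp.norm_def]
  calc C * ∫ s, ‖f s‖ ∂μ
      ≤ C * ((eLpNorm (⇑f) (ENNReal.ofReal p) μ).toReal * (μ univ).toReal ^ (1 - 1/p)) :=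
        mul_le_mul_of_nonneg_left (integral_norm_le_of_memLp hp (Lp.memLp f)) hC0
  _ = _ := by ring

lemma gronwall_discrete (T a K : ℝ) (hT : 0 < T) (N : ℕ) (hN : 0 < N)
    (g φ : ℝ → ℝ)
    (hφc : ContinuousOn φ (Icc 0 T)) (hφ0 : ∀ t ∈ Icc (0:ℝ) T, 0 ≤ φ t)
    (ha : 0 ≤ a) (hg0 : ∀ s, 0 ≤ g s)
    (hgint : IntegrableOn g (Icc 0 T) volume)
    (hgφint : IntegrableOn (fun s => g s * φ s) (Icc 0 T) volume)
    (hK : ∫ s in Icc (0:ℝ) T, g s ≤ K)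
    (hsmall : ∀ t₁ t₂ : ℝ, 0 ≤ t₁ → t₂ ≤ T → t₂ - t₁ ≤ T/N → ∫ s in Ioc t₁ t₂, g s ≤ 1/2)
    (hineq : ∀ t ∈ Icc (0:ℝ) T, φ t ≤ a + ∫ s in Ioc 0 t, g s * φ s) :
    ∀ t ∈ Icc (0:ℝ) T, φ t ≤ a * (2*K+3)^N := by
  have hK0 : 0 ≤ K := by
    refine le_trans ?_ hK
    exact setIntegral_nonneg measurableSet_Icc fun s _ => hg0 s
  have hc1 : (1:ℝ) ≤ 2*K+3 := by linarith
  set τ : ℕ → ℝ := fun m => m * T / N with hτ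
  have hτ0 : τ 0 = 0 := by simp [hτ]
  have hτmono : ∀ m : ℕ, τ m ≤ τ (m+1) := by
    intro m
    apply div_le_div_of_nonneg_right ?_ (by positivity)
    · push_cast; nlinarith
  have hτle : ∀ m : ℕ, m ≤ N → τ m ≤ T := by
    intro m hm
    rw [hτ, div_le_iff₀ (by positivity)]
    have : (m:ℝ) ≤ N := by exact_mod_cast hm
    nlinarith
  have hτnn : ∀ m : ℕ, 0 ≤ τ m := by intro m; rw [hτ]; positivity
  have hτN : τ N = T := by
    rw [hτ]; field_simp
  have main : ∀ m : ℕ, m ≤ N → ∀ t ∈ Icc 0 (τ m), φ t ≤ a * (2*K+3)^m := by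
    intro m
    induction m with
    | zero =>
      intro _ t ht
      rw [hτ0] at ht
      have h0 : t = 0 := le_antisymm ht.2 ht.1
      have := hineq t (by rw [h0]; exact ⟨le_rfl, hT.le⟩)
      simpa [h0] using this
    | succ m ih =>
      intro hm t ht
      have hmN : m ≤ N := Nat.le_of_succ_le hm
      have ihm := ih hmN
      have hJsub : Icc (τ m) (τ (m+1)) ⊆ Icc 0 T :=
        Icc_subset_Icc (hτnn m) (hτle (m+1) hm)
      obtain ⟨t₀, ht₀J, ht₀max⟩ :=
        (isCompact_Icc (a := τ m) (b := τ (m+1))).exists_isMaxOn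
          (nonempty_Icc.2 (hτmono m)) (hφc.mono hJsub)
      have ht₀T : t₀ ∈ Icc 0 T := hJsub ht₀J
      have hsplit : ∫ s in Ioc 0 t₀, g s * φ s
          = (∫ s in Ioc 0 (τ m), g s * φ s) + ∫ s in Ioc (τ m) t₀, g s * φ s := by
        rw [← setIntegral_union (Ioc_disjoint_Ioc_of_le le_rfl) measurableSet_Ioc
          (hgφint.mono_set (Ioc_subset_Icc_self.trans (Icc_subset_Icc (le_refl 0) (hτle m hmN))))
          (hgφint.mono_set (Ioc_subset_Icc_self.trans (Icc_subset_Icc (hτnn m) ht₀T.2))),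
          Ioc_union_Ioc_eq_Ioc (hτnn m) ht₀J.1]
      have hI1 : ∫ s in Ioc 0 (τ m), g s * φ s ≤ K * (a * (2*K+3)^m) := by
        have hb0 : 0 ≤ a * (2*K+3)^m := by positivity
        calc ∫ s in Ioc 0 (τ m), g s * φ s
            ≤ ∫ s in Ioc 0 (τ m), g s * (a * (2*K+3)^m) := by
              refine setIntegral_mono_on
                (hgφint.mono_set (Ioc_subset_Icc_self.trans (Icc_subset_Icc le_rfl (hτle m hmN))))
                ((hgint.mono_set (Ioc_subset_Icc_self.trans (Icc_subset_Icc le_rfl (hτle m hmN)))).mul_const _)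
                measurableSet_Ioc ?_
              intro s hs
              exact mul_le_mul_of_nonneg_left
                (ihm s (Icc_subset_Icc le_rfl (le_refl _) (Ioc_subset_Icc_self hs))) (hg0 s)
        _ = (∫ s in Ioc 0 (τ m), g s) * (a * (2*K+3)^m) := by
              rw [integral_mul_const]
        _ ≤ K * (a * (2*K+3)^m) := by
              refine mul_le_mul_of_nonneg_right ?_ hb0
              refine le_trans ?_ hK
              refine setIntegral_mono_set hgint (ae_of_all _ hg0) ?_
              exact (HasSubset.Subset.eventuallyLE
                (Ioc_subset_Icc_self.trans (Icc_subset_Icc le_rfl (hτle m hmN))))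
      have hI2 : ∫ s in Ioc (τ m) t₀, g s * φ s ≤ (1/2) * φ t₀ := by
        have hφt₀ : 0 ≤ φ t₀ := hφ0 t₀ ht₀T
        calc ∫ s in Ioc (τ m) t₀, g s * φ s
            ≤ ∫ s in Ioc (τ m) t₀, g s * φ t₀ := by
              refine setIntegral_mono_on
                (hgφint.mono_set (Ioc_subset_Icc_self.trans (Icc_subset_Icc (hτnn m) ht₀T.2)))
                ((hgint.mono_set (Ioc_subset_Icc_self.trans (Icc_subset_Icc (hτnn m) ht₀T.2))).mul_const _)
                measurableSet_Ioc ?_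
              intro s hs
              refine mul_le_mul_of_nonneg_left ?_ (hg0 s)
              exact ht₀max ⟨hs.1.le, hs.2.trans ht₀J.2⟩
        _ = (∫ s in Ioc (τ m) t₀, g s) * φ t₀ := by rw [integral_mul_const]
        _ ≤ (1/2) * φ t₀ := by
              refine mul_le_mul_of_nonneg_right ?_ hφt₀
              refine hsmall (τ m) t₀ (hτnn m) ht₀T.2 ?_
              have h1 : t₀ ≤ τ (m+1) := ht₀J.2
              have h2 : τ (m+1) - τ m = T/N := by
                rw [hτ]; push_cast; field_simp; ring
              linarith
      have hmax : φ t₀ ≤ 2*a + 2*K*(a * (2*K+3)^m) := by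
        have := hineq t₀ ht₀T
        rw [hsplit] at this
        linarith [hI1, hI2]
      have hpow0 : (0:ℝ) ≤ a * (2*K+3)^m := by positivity
      have h1 : (1:ℝ) ≤ (2*K+3)^m := one_le_pow₀ hc1
      have hbnd : φ t ≤ 2*a + (2*K+1)*(a * (2*K+3)^m) := by
        rcases le_or_gt t (τ m) with h | h
        · refine le_trans (ihm t ⟨ht.1, h⟩) ?_
          nlinarith [mul_nonneg hK0 hpow0]
        · refine le_trans (ht₀max ⟨h.le, ht.2⟩) ?_
          nlinarith [hmax]
      refine hbnd.trans ?_
      have h2 : a * (2*K+3)^(m+1) = (2*K+3) * (a * (2*K+3)^m) := by ring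
      rw [h2]
      nlinarith [mul_le_mul_of_nonneg_left h1 ha]
  intro t ht
  refine main N le_rfl t ?_
  rwa [hτN]

lemma grid_uniform {E : Type*} [NormedAddCommGroup E]
    (T : ℝ) (hT : 0 < T) (I : ℕ → ℝ → E) (Cu e : ℝ) (hCu : 0 ≤ Cu) (he : 0 < e)
    (hhold : ∀ k, ∀ t₁ t₂ : ℝ, 0 ≤ t₁ → t₁ ≤ t₂ → t₂ ≤ T →
      ‖I k t₂ - I k t₁‖ ≤ Cu * (t₂ - t₁) ^ e)
    (hpt : ∀ t ∈ Icc (0:ℝ) T, Tendsto (fun k => I k t) atTop (𝓝 0))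
    {ε : ℝ} (hε : 0 < ε) :
    ∀ᶠ k in atTop, ∀ t ∈ Icc (0:ℝ) T, ‖I k t‖ ≤ ε := by
  set δ : ℝ := (ε/(2*(Cu+1))) ^ e⁻¹ with hδdef
  have hδpos : 0 < δ := Real.rpow_pos_of_pos (by positivity) _
  obtain ⟨m, hm⟩ := exists_nat_gt (max 1 (T/δ))
  have hm1 : (1:ℝ) ≤ m := le_of_lt (lt_of_le_of_lt (le_max_left _ _) hm)
  have hm0 : (0:ℝ) < m := by linarith
  have hmesh : T/m < δ := by
    rw [div_lt_iff₀ hm0]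
    have h2 : T/δ < m := lt_of_le_of_lt (le_max_right _ _) hm
    rw [div_lt_iff₀ hδpos] at h2
    linarith
  have hkey : Cu * (T/m) ^ e ≤ ε/2 := by
    have h1 : (T/m : ℝ) ^ e ≤ δ ^ e :=
      Real.rpow_le_rpow (by positivity) hmesh.le he.le
    have h2 : δ ^ e = ε/(2*(Cu+1)) := by
      rw [hδdef, Real.rpow_inv_rpow (by positivity) he.ne']
    calc Cu * (T/m) ^ e ≤ Cu * (ε/(2*(Cu+1))) := by
          rw [← h2]; exact mul_le_mul_of_nonneg_left h1 hCu
    _ = (Cu * ε) / (2*(Cu+1)) := by ring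
    _ ≤ ε/2 := by
          rw [div_le_div_iff₀ (by positivity) (by norm_num)]
          nlinarith
  have hgrid : ∀ᶠ k in atTop, ∀ j ∈ Finset.range (m+1), ‖I k ((j:ℝ) * T / m)‖ ≤ ε/2 := by
    rw [Filter.eventually_all_finset]
    intro j hj
    have hjm : (j:ℝ) ≤ m := by
      have := Finset.mem_range.mp hj
      exact_mod_cast Nat.lt_succ_iff.mp this
    have htj : (j:ℝ) * T / m ∈ Icc (0:ℝ) T := by
      constructor
      · positivity
      · rw [div_le_iff₀ hm0]; nlinarith
    have := (hpt _ htj).norm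
    simp only [norm_zero] at this
    exact this.eventually_le_const (by positivity)
  filter_upwards [hgrid] with k hk t ht
  set j : ℕ := ⌊t * m / T⌋₊ with hjdef
  have htm : 0 ≤ t * m / T := by
    have := ht.1; positivity
  have hjle : (j:ℝ) ≤ t * m / T := Nat.floor_le htm
  have hjgt : t * m / T < j + 1 := Nat.lt_floor_add_one _
  have hjm : j ∈ Finset.range (m+1) := by
    rw [Finset.mem_range, Nat.lt_succ_iff]
    have h1 : t * m / T ≤ m := by
      rw [div_le_iff₀ hT]
      nlinarith [ht.2, hm0]
    exact_mod_cast Nat.floor_le_of_le h1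
  set tj : ℝ := (j:ℝ) * T / m with htjdef
  have htj1 : tj ≤ t := by
    rw [htjdef, div_le_iff₀ hm0]
    rw [le_div_iff₀ hT] at hjle
    linarith
  have htj0 : 0 ≤ tj := by rw [htjdef]; positivity
  have htj2 : t - tj ≤ T/m := by
    rw [div_lt_iff₀ hT] at hjgt
    have hle : t ≤ ((j:ℝ)+1)*T/m := by
      rw [le_div_iff₀ hm0]; linarith
    have hd : ((j:ℝ)+1)*T/m - (j:ℝ)*T/m = T/m := by
      field_simp; ring
    rw [htjdef]; linarith
  calc ‖I k t‖ = ‖I k tj + (I k t - I k tj)‖ := by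
        congr 1
        abel
  _ ≤ ‖I k tj‖ + ‖I k t - I k tj‖ := norm_add_le _ _
  _ ≤ ε/2 + Cu * (t - tj) ^ e := by
      gcongr
      · exact hk j hjm
      · exact hhold k tj t htj0 htj1 ht.2
  _ ≤ ε/2 + Cu * (T/m) ^ e := by
      have := mul_le_mul_of_nonneg_left (Real.rpow_le_rpow (by linarith) htj2 he.le) hCu
      linarith
  _ ≤ ε := by linarith

lemma coord_le_norm {d : ℕ} (v : EuclideanSpace ℝ (Fin d)) (i : Fin d) : |v i| ≤ ‖v‖ := by
  rw [EuclideanSpace.norm_eq]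
  calc |v i| = Real.sqrt (|v i|^2) := by rw [Real.sqrt_sq (abs_nonneg _)]
  _ ≤ _ := by
      apply Real.sqrt_le_sqrt
      rw [sq_abs]
      have h2 : (v i)^2 = ‖v i‖^2 := by rw [Real.norm_eq_abs, sq_abs]
      rw [h2]
      exact Finset.single_le_sum (f := fun j => ‖v j‖^2) (fun j _ => sq_nonneg _)
        (Finset.mem_univ i)

lemma norm_le_sqrt_mul {d : ℕ} (v : EuclideanSpace ℝ (Fin d)) (C : ℝ) (hC : 0 ≤ C)
    (h : ∀ i, |v i| ≤ C) : ‖v‖ ≤ Real.sqrt d * C := by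
  rw [EuclideanSpace.norm_eq]
  calc Real.sqrt (∑ i, ‖v i‖^2) ≤ Real.sqrt (∑ _i : Fin d, C^2) := by
        apply Real.sqrt_le_sqrt
        refine Finset.sum_le_sum fun i _ => ?_
        rw [Real.norm_eq_abs]
        nlinarith [h i, abs_nonneg (v i)]
  _ = Real.sqrt (d * C^2) := by rw [Finset.sum_const, Finset.card_univ, Fintype.card_fin,
        nsmul_eq_mul]
  _ = Real.sqrt d * C := by
        rw [Real.sqrt_mul (by positivity), Real.sqrt_sq hC]

lemma sum_smul_bound {n d : ℕ} (w : EuclideanSpace ℝ (Fin d))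
    (z : Fin d → EuclideanSpace ℝ (Fin n)) (C : ℝ) (hC : 0 ≤ C) (hz : ∀ i, ‖z i‖ ≤ C) :
    ‖∑ i, w i • z i‖ ≤ d * C * ‖w‖ := by
  calc ‖∑ i, w i • z i‖ ≤ ∑ i, ‖w i • z i‖ := norm_sum_le _ _
  _ ≤ ∑ _i : Fin d, C * ‖w‖ := by
      refine Finset.sum_le_sum fun i _ => ?_
      rw [norm_smul, Real.norm_eq_abs]
      calc |w i| * ‖z i‖ ≤ ‖w‖ * C :=
        mul_le_mul (coord_le_norm w i) (hz i) (norm_nonneg _) (norm_nonneg _)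
      _ = C * ‖w‖ := mul_comm _ _
  _ = d * C * ‖w‖ := by
      rw [Finset.sum_const, Finset.card_univ, Fintype.card_fin, nsmul_eq_mul]; ring

end helpers

/-- Trajectory on `[0,T]` of a control `u` starting at `x` for the affine control system
determined by `X₀, X₁, …, X_d`. -/
def IsTrajectory {n d : ℕ}
    (X0 : EuclideanSpace ℝ (Fin n) → EuclideanSpace ℝ (Fin n))
    (X : Fin d → EuclideanSpace ℝ (Fin n) → EuclideanSpace ℝ (Fin n))
    (x : EuclideanSpace ℝ (Fin n)) (T : ℝ)
    (u : ℝ → EuclideanSpace ℝ (Fin d))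
    (γ : ℝ → EuclideanSpace ℝ (Fin n)) : Prop :=
  ContinuousOn γ (Set.Icc 0 T) ∧
    ∀ t ∈ Set.Icc (0:ℝ) T,
      γ t = x + ∫ s in (0:ℝ)..t, (X0 (γ s) + ∑ i, u s i • X i (γ s))

set_option maxHeartbeats 4000000

/-- if `u_k ⇀ u` weakly in `L^p([0,T],ℝ^d)`, then the trajectories
`γ_{u_k}` converge uniformly on `[0,T]` to `γ_u`. -/
theorem stmt7 (n d : ℕ) (p : ℝ) (hp : 1 < p) [Fact (1 ≤ ENNReal.ofReal p)]
    (T : ℝ) (hT : 0 < T) (x : EuclideanSpace ℝ (Fin n))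
    (X0 : EuclideanSpace ℝ (Fin n) → EuclideanSpace ℝ (Fin n))
    (X : Fin d → EuclideanSpace ℝ (Fin n) → EuclideanSpace ℝ (Fin n))
    (hX0smooth : ContDiff ℝ (⊤ : ℕ∞) X0) (hXsmooth : ∀ i, ContDiff ℝ (⊤ : ℕ∞) (X i))
    (hX0bdd : ∃ C, ∀ y, ‖X0 y‖ ≤ C) (hXbdd : ∃ C, ∀ i y, ‖X i y‖ ≤ C)
    (hX0der : ∃ C, ∀ y, ‖fderiv ℝ X0 y‖ ≤ C)
    (hXder : ∃ C, ∀ i y, ‖fderiv ℝ (X i) y‖ ≤ C)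
    (u : ℕ → Lp (EuclideanSpace ℝ (Fin d)) (ENNReal.ofReal p)
      (volume.restrict (Set.Icc (0:ℝ) T)))
    (ulim : Lp (EuclideanSpace ℝ (Fin d)) (ENNReal.ofReal p)
      (volume.restrict (Set.Icc (0:ℝ) T)))
    (hweak : ∀ φ : Lp (EuclideanSpace ℝ (Fin d)) (ENNReal.ofReal p)
        (volume.restrict (Set.Icc (0:ℝ) T)) →L[ℝ] ℝ,
      Tendsto (fun k => φ (u k)) atTop (𝓝 (φ ulim)))
    (γ : ℕ → ℝ → EuclideanSpace ℝ (Fin n))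
    (γlim : ℝ → EuclideanSpace ℝ (Fin n))
    (hγ : ∀ k, IsTrajectory X0 X x T (⇑(u k)) (γ k))
    (hγlim : IsTrajectory X0 X x T (⇑ulim) γlim) :
    TendstoUniformlyOn γ γlim atTop (Set.Icc 0 T) := by
  classical
  have hp0 : (0:ℝ) < p := lt_trans one_pos hp
  have hple : (1:ℝ≥0∞) ≤ ENNReal.ofReal p := Fact.out
  haveI hμfin : IsFiniteMeasure (volume.restrict (Set.Icc (0:ℝ) T)) := by
    constructor
    rw [Measure.restrict_apply_univ]
    exact measure_Icc_lt_top
  have he : (0:ℝ) < 1 - 1/p := by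
    rw [sub_pos, div_lt_one hp0]; exact hp
  have hres : ∀ A : Set ℝ, MeasurableSet A → A ⊆ Icc 0 T →
      (volume.restrict (Set.Icc (0:ℝ) T)).restrict A = volume.restrict A := by
    intro A hA hsub
    rw [Measure.restrict_restrict hA, inter_eq_self_of_subset_left hsub]
  have hfinA : ∀ A : Set ℝ, A ⊆ Icc 0 T → IsFiniteMeasure (volume.restrict A) := by
    intro A hsub
    constructor
    rw [Measure.restrict_apply_univ]
    exact lt_of_le_of_lt (measure_mono hsub) measure_Icc_lt_top
  -- constants
  obtain ⟨C0, hC0⟩ := hX0bdd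
  have hC00 : 0 ≤ C0 := le_trans (norm_nonneg _) (hC0 0)
  obtain ⟨CX', hCX'⟩ := hXbdd
  set CX := max CX' 0 with hCXdef
  have hCX : ∀ i y, ‖X i y‖ ≤ CX := fun i y => le_trans (hCX' i y) (le_max_left _ _)
  have hCX0 : 0 ≤ CX := le_max_right _ _
  obtain ⟨L0', hL0'⟩ := hX0der
  set L0 := max L0' 0 with hL0def
  have hL0 : ∀ y, ‖fderiv ℝ X0 y‖ ≤ L0 := fun y => le_trans (hL0' y) (le_max_left _ _)
  have hL00 : 0 ≤ L0 := le_max_right _ _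
  obtain ⟨LX', hLX'⟩ := hXder
  set LX := max LX' 0 with hLXdef
  have hLX : ∀ i y, ‖fderiv ℝ (X i) y‖ ≤ LX := fun i y => le_trans (hLX' i y) (le_max_left _ _)
  have hLX0 : 0 ≤ LX := le_max_right _ _
  -- Lipschitz estimates
  have hlip0 : ∀ a b : EuclideanSpace ℝ (Fin n), ‖X0 a - X0 b‖ ≤ L0 * ‖a - b‖ := by
    intro a b
    exact Convex.norm_image_sub_le_of_norm_fderiv_le
      (fun y _ => (hX0smooth.differentiable (by simp)).differentiableAt)
      (fun y _ => hL0 y) convex_univ (mem_univ b) (mem_univ a)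
  have hlipX : ∀ i, ∀ a b : EuclideanSpace ℝ (Fin n), ‖X i a - X i b‖ ≤ LX * ‖a - b‖ := by
    intro i a b
    exact Convex.norm_image_sub_le_of_norm_fderiv_le
      (fun y _ => ((hXsmooth i).differentiable (by simp)).differentiableAt)
      (fun y _ => hLX i y) convex_univ (mem_univ b) (mem_univ a)
  obtain ⟨M, hM, hMl, hM0⟩ := bdd_of_weak u ulim hweak
  have hγc : ∀ k, ContinuousOn (γ k) (Icc 0 T) := fun k => (hγ k).1
  have hγlc : ContinuousOn γlim (Icc 0 T) := hγlim.1
  -- measurability / integrability of controls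
  have humeas : ∀ (f : Lp (EuclideanSpace ℝ (Fin d)) (ENNReal.ofReal p) (volume.restrict (Set.Icc (0:ℝ) T)))
      (A : Set ℝ), MeasurableSet A → A ⊆ Icc 0 T →
      AEStronglyMeasurable (⇑f) (volume.restrict A) := by
    intro f A hA hsub
    rw [← hres A hA hsub]
    exact (Lp.aestronglyMeasurable f).mono_measure Measure.restrict_le_self
  have huint : ∀ (f : Lp (EuclideanSpace ℝ (Fin d)) (ENNReal.ofReal p) (volume.restrict (Set.Icc (0:ℝ) T)))
      (A : Set ℝ), MeasurableSet A → A ⊆ Icc 0 T →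
      IntegrableOn (⇑f) A volume := by
    intro f A hA hsub
    have h1 : Integrable (⇑f) (volume.restrict (Set.Icc (0:ℝ) T)) :=
      memLp_one_iff_integrable.mp ((Lp.memLp f).mono_exponent hple)
    rw [IntegrableOn, ← hres A hA hsub]
    exact h1.mono_measure Measure.restrict_le_self
  -- uniform L¹ (Hölder) bound
  have hL1 : ∀ (f : Lp (EuclideanSpace ℝ (Fin d)) (ENNReal.ofReal p) (volume.restrict (Set.Icc (0:ℝ) T))) (a b : ℝ),
      0 ≤ a → a ≤ b → b ≤ T →
      ∫ s in Ioc a b, ‖f s‖ ∂volume ≤ ‖f‖ * (b - a) ^ (1 - 1/p) := by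
    intro f a b ha hab hb
    have hsub : Ioc a b ⊆ Icc 0 T := fun s hs => ⟨le_trans ha hs.1.le, le_trans hs.2 hb⟩
    have h1 : volume.restrict (Ioc a b) = (volume.restrict (Set.Icc (0:ℝ) T)).restrict (Ioc a b) :=
      (hres _ measurableSet_Ioc hsub).symm
    haveI : IsFiniteMeasure ((volume.restrict (Set.Icc (0:ℝ) T)).restrict (Ioc a b)) := by
      rw [hres _ measurableSet_Ioc hsub]; exact hfinA _ hsub
    have hmem : MemLp (⇑f) (ENNReal.ofReal p) ((volume.restrict (Set.Icc (0:ℝ) T)).restrict (Ioc a b)) :=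
      (Lp.memLp f).mono_measure Measure.restrict_le_self
    have key := integral_norm_le_of_memLp hp hmem
    calc ∫ s in Ioc a b, ‖f s‖ ∂volume = ∫ s, ‖f s‖ ∂((volume.restrict (Set.Icc (0:ℝ) T)).restrict (Ioc a b)) := by rw [h1]
    _ ≤ (eLpNorm (⇑f) (ENNReal.ofReal p) ((volume.restrict (Set.Icc (0:ℝ) T)).restrict (Ioc a b))).toReal
        * (((volume.restrict (Set.Icc (0:ℝ) T)).restrict (Ioc a b)) univ).toReal ^ (1 - 1/p) := key
    _ ≤ ‖f‖ * (b - a) ^ (1 - 1/p) := by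
        refine mul_le_mul ?_ ?_ (Real.rpow_nonneg ENNReal.toReal_nonneg _) (norm_nonneg f)
        · rw [Lp.norm_def]
          exact ENNReal.toReal_mono (Lp.eLpNorm_ne_top f)
            (eLpNorm_mono_measure _ Measure.restrict_le_self)
        · refine Real.rpow_le_rpow ENNReal.toReal_nonneg ?_ he.le
          rw [Measure.restrict_apply_univ, Measure.restrict_apply measurableSet_Ioc]
          calc (volume (Ioc a b ∩ Icc 0 T)).toReal ≤ (volume (Ioc a b)).toReal := by
                apply ENNReal.toReal_mono
                · rw [Real.volume_Ioc]; exact ENNReal.ofReal_ne_top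
                · exact measure_mono inter_subset_left
          _ = b - a := by rw [Real.volume_Ioc, ENNReal.toReal_ofReal (by linarith)]
  -- measurability and integrability of the driving terms
  have hsummeas : ∀ (f : Lp (EuclideanSpace ℝ (Fin d)) (ENNReal.ofReal p) (volume.restrict (Set.Icc (0:ℝ) T)))
      (c : ℝ → EuclideanSpace ℝ (Fin n)), ContinuousOn c (Icc 0 T) →
      ∀ (A : Set ℝ), MeasurableSet A → A ⊆ Icc 0 T →
      AEStronglyMeasurable (fun s => ∑ i, f s i • X i (c s)) (volume.restrict A) := by
    intro f c hc A hA hsub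
    refine Finset.aestronglyMeasurable_fun_sum _ fun i _ => ?_
    exact ((EuclideanSpace.proj i).continuous.comp_aestronglyMeasurable
      (humeas f A hA hsub)).smul
      (((hXsmooth i).continuous.comp_continuousOn (hc.mono hsub)).aestronglyMeasurable hA)
  have hsumint : ∀ (f : Lp (EuclideanSpace ℝ (Fin d)) (ENNReal.ofReal p) (volume.restrict (Set.Icc (0:ℝ) T)))
      (c : ℝ → EuclideanSpace ℝ (Fin n)), ContinuousOn c (Icc 0 T) →
      ∀ (A : Set ℝ), MeasurableSet A → A ⊆ Icc 0 T →
      IntegrableOn (fun s => ∑ i, f s i • X i (c s)) A volume := by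
    intro f c hc A hA hsub
    refine Integrable.mono' (((huint f A hA hsub).norm).const_mul ((d:ℝ) * CX))
      (hsummeas f c hc A hA hsub) (ae_of_all _ fun s => ?_)
    exact sum_smul_bound (f s) (fun i => X i (c s)) CX hCX0 (fun i => hCX i (c s))
  have hX0int : ∀ (c : ℝ → EuclideanSpace ℝ (Fin n)), ContinuousOn c (Icc 0 T) →
      ∀ (A : Set ℝ), MeasurableSet A → A ⊆ Icc 0 T →
      IntegrableOn (fun s => X0 (c s)) A volume := by
    intro c hc A hA hsub
    haveI := hfinA A hsub
    exact Integrable.mono' (integrable_const C0)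
      ((hX0smooth.continuous.comp_continuousOn (hc.mono hsub)).aestronglyMeasurable hA)
      (ae_of_all _ fun s => hC0 _)
  have htrajint : ∀ (f : Lp (EuclideanSpace ℝ (Fin d)) (ENNReal.ofReal p) (volume.restrict (Set.Icc (0:ℝ) T)))
      (c : ℝ → EuclideanSpace ℝ (Fin n)), ContinuousOn c (Icc 0 T) →
      ∀ (A : Set ℝ), MeasurableSet A → A ⊆ Icc 0 T →
      IntegrableOn (fun s => X0 (c s) + ∑ i, f s i • X i (c s)) A volume :=
    fun f c hc A hA hsub => (hX0int c hc A hA hsub).add (hsumint f c hc A hA hsub)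
  -- trajectory difference as a set integral
  have heq : ∀ k, ∀ t ∈ Icc (0:ℝ) T, γ k t - γlim t =
      ∫ s in Ioc (0:ℝ) t, ((X0 (γ k s) + ∑ i, u k s i • X i (γ k s))
        - (X0 (γlim s) + ∑ i, ulim s i • X i (γlim s))) ∂volume := by
    intro k t ht
    have hsub : Ioc (0:ℝ) t ⊆ Icc 0 T := fun s hs => ⟨hs.1.le, hs.2.trans ht.2⟩
    rw [(hγ k).2 t ht, hγlim.2 t ht, add_sub_add_left_eq_sub,
      intervalIntegral.integral_of_le ht.1, intervalIntegral.integral_of_le ht.1,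
      ← integral_sub (htrajint (u k) (γ k) (hγc k) _ measurableSet_Ioc hsub)
        (htrajint ulim γlim hγlc _ measurableSet_Ioc hsub)]
  -- the weak term
  set Ih : ℕ → ℝ → EuclideanSpace ℝ (Fin n) := fun k t =>
    ∫ s in Ioc (0:ℝ) t, (∑ i, (u k s i - ulim s i) • X i (γlim s)) ∂volume with hIdef
  have hdiffeq : ∀ k (s : ℝ), (∑ i, (u k s i - ulim s i) • X i (γlim s))
      = (∑ i, u k s i • X i (γlim s)) - ∑ i, ulim s i • X i (γlim s) := by
    intro k s
    rw [← Finset.sum_sub_distrib]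
    exact Finset.sum_congr rfl fun i _ => sub_smul _ _ _
  have hhint : ∀ k (A : Set ℝ), MeasurableSet A → A ⊆ Icc 0 T →
      IntegrableOn (fun s => ∑ i, (u k s i - ulim s i) • X i (γlim s)) A volume := by
    intro k A hA hsub
    have h1 : (fun s => ∑ i, (u k s i - ulim s i) • X i (γlim s))
        = fun s => (∑ i, u k s i • X i (γlim s)) - ∑ i, ulim s i • X i (γlim s) :=
      funext fun s => hdiffeq k s
    rw [h1]
    exact (hsumint (u k) γlim hγlc A hA hsub).sub (hsumint ulim γlim hγlc A hA hsub)
  -- the Gronwall coefficient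
  have hgmeas : ∀ k (A : Set ℝ), MeasurableSet A → A ⊆ Icc 0 T →
      AEStronglyMeasurable (fun s => L0 + ((d:ℝ)*LX) * ‖u k s‖) (volume.restrict A) := by
    intro k A hA hsub
    exact aestronglyMeasurable_const.add
      (((humeas (u k) A hA hsub).norm).const_mul _)
  have hgint : ∀ k (A : Set ℝ), MeasurableSet A → A ⊆ Icc 0 T →
      IntegrableOn (fun s => L0 + ((d:ℝ)*LX) * ‖u k s‖) A volume := by
    intro k A hA hsub
    haveI := hfinA A hsub
    exact (integrable_const L0).add (((huint (u k) A hA hsub).norm).const_mul _)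
  have hg0 : ∀ k (s : ℝ), 0 ≤ L0 + ((d:ℝ)*LX) * ‖u k s‖ := by
    intro k s; positivity
  have hgφint : ∀ k (A : Set ℝ), MeasurableSet A → A ⊆ Icc 0 T →
      IntegrableOn (fun s => (L0 + ((d:ℝ)*LX) * ‖u k s‖) * ‖γ k s - γlim s‖) A volume := by
    intro k A hA hsub
    obtain ⟨Cφ, hCφ⟩ := isCompact_Icc.exists_bound_of_continuousOn ((hγc k).sub hγlc)
    refine Integrable.mono' ((hgint k A hA hsub).mul_const Cφ)
      ((hgmeas k A hA hsub).mul
        ((((hγc k).sub hγlc).mono hsub).norm.aestronglyMeasurable hA)) ?_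
    filter_upwards [ae_restrict_mem hA] with s hs
    have h1 : ‖γ k s - γlim s‖ ≤ Cφ := hCφ s (hsub hs)
    have h2 : 0 ≤ L0 + ((d:ℝ)*LX) * ‖u k s‖ := hg0 k s
    rw [Real.norm_eq_abs, abs_of_nonneg (by positivity)]
    exact mul_le_mul_of_nonneg_left h1 h2
  -- master integral inequality
  have hineq : ∀ k, ∀ t ∈ Icc (0:ℝ) T, ‖γ k t - γlim t‖ ≤ ‖Ih k t‖ +
      ∫ s in Ioc (0:ℝ) t, (L0 + ((d:ℝ)*LX) * ‖u k s‖) * ‖γ k s - γlim s‖ ∂volume := by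
    intro k t ht
    have hsub : Ioc (0:ℝ) t ⊆ Icc 0 T := fun s hs => ⟨hs.1.le, hs.2.trans ht.2⟩
    have hDint : IntegrableOn (fun s => (X0 (γ k s) + ∑ i, u k s i • X i (γ k s))
        - (X0 (γlim s) + ∑ i, u k s i • X i (γlim s))) (Ioc 0 t) volume :=
      (htrajint (u k) (γ k) (hγc k) _ measurableSet_Ioc hsub).sub
        (htrajint (u k) γlim hγlc _ measurableSet_Ioc hsub)
    have hFeq : ∀ s : ℝ, (X0 (γ k s) + ∑ i, u k s i • X i (γ k s))
        - (X0 (γlim s) + ∑ i, ulim s i • X i (γlim s))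
        = ((X0 (γ k s) + ∑ i, u k s i • X i (γ k s))
            - (X0 (γlim s) + ∑ i, u k s i • X i (γlim s)))
          + ∑ i, (u k s i - ulim s i) • X i (γlim s) := by
      intro s
      rw [hdiffeq k s]
      abel
    have hDbound : ∀ s : ℝ, ‖(X0 (γ k s) + ∑ i, u k s i • X i (γ k s))
        - (X0 (γlim s) + ∑ i, u k s i • X i (γlim s))‖
        ≤ (L0 + ((d:ℝ)*LX) * ‖u k s‖) * ‖γ k s - γlim s‖ := by
      intro s
      have hDeq : (X0 (γ k s) + ∑ i, u k s i • X i (γ k s))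
          - (X0 (γlim s) + ∑ i, u k s i • X i (γlim s))
          = (X0 (γ k s) - X0 (γlim s)) + ∑ i, u k s i • (X i (γ k s) - X i (γlim s)) := by
        have h1 : ∀ i : Fin d, u k s i • (X i (γ k s) - X i (γlim s))
            = u k s i • X i (γ k s) - u k s i • X i (γlim s) := fun i => smul_sub _ _ _
        simp only [h1, Finset.sum_sub_distrib]
        abel
      rw [hDeq]
      calc ‖(X0 (γ k s) - X0 (γlim s)) + ∑ i, u k s i • (X i (γ k s) - X i (γlim s))‖
          ≤ ‖X0 (γ k s) - X0 (γlim s)‖ + ‖∑ i, u k s i • (X i (γ k s) - X i (γlim s))‖ :=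
            norm_add_le _ _
      _ ≤ L0 * ‖γ k s - γlim s‖ + (d:ℝ) * (LX * ‖γ k s - γlim s‖) * ‖u k s‖ := by
            gcongr ?_ + ?_
            · exact hlip0 _ _
            · exact sum_smul_bound (u k s) _ (LX * ‖γ k s - γlim s‖)
                (by positivity) (fun i => hlipX i _ _)
      _ = (L0 + ((d:ℝ)*LX) * ‖u k s‖) * ‖γ k s - γlim s‖ := by ring
    have hstep : γ k t - γlim t = (∫ s in Ioc (0:ℝ) t,
        ((X0 (γ k s) + ∑ i, u k s i • X i (γ k s))
          - (X0 (γlim s) + ∑ i, u k s i • X i (γlim s))) ∂volume) + Ih k t := by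
      rw [heq k t ht, hIdef]
      rw [← integral_add hDint (hhint k _ measurableSet_Ioc hsub)]
      exact integral_congr_ae (ae_of_all _ fun s => hFeq s)
    calc ‖γ k t - γlim t‖ = ‖(∫ s in Ioc (0:ℝ) t,
        ((X0 (γ k s) + ∑ i, u k s i • X i (γ k s))
          - (X0 (γlim s) + ∑ i, u k s i • X i (γlim s))) ∂volume) + Ih k t‖ := by
          rw [hstep]
    _ ≤ ‖∫ s in Ioc (0:ℝ) t, ((X0 (γ k s) + ∑ i, u k s i • X i (γ k s))
          - (X0 (γlim s) + ∑ i, u k s i • X i (γlim s))) ∂volume‖ + ‖Ih k t‖ :=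
          norm_add_le _ _
    _ ≤ (∫ s in Ioc (0:ℝ) t, ‖(X0 (γ k s) + ∑ i, u k s i • X i (γ k s))
          - (X0 (γlim s) + ∑ i, u k s i • X i (γlim s))‖ ∂volume) + ‖Ih k t‖ := by
          gcongr
          exact norm_integral_le_integral_norm _
    _ ≤ (∫ s in Ioc (0:ℝ) t, (L0 + ((d:ℝ)*LX) * ‖u k s‖) * ‖γ k s - γlim s‖ ∂volume)
          + ‖Ih k t‖ := by
          gcongr ?_ + _
          refine setIntegral_mono_on hDint.norm (hgφint k _ measurableSet_Ioc hsub)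
            measurableSet_Ioc fun s _ => hDbound s
    _ = _ := add_comm _ _
  -- bound on integrals of the coefficient
  have hgbound : ∀ k (a b : ℝ), 0 ≤ a → a ≤ b → b ≤ T →
      ∫ s in Ioc a b, (L0 + ((d:ℝ)*LX) * ‖u k s‖) ∂volume
        ≤ L0*(b-a) + ((d:ℝ)*LX) * (M*(b-a)^(1 - 1/p)) := by
    intro k a b ha hab hb
    have hsub : Ioc a b ⊆ Icc 0 T := fun s hs => ⟨le_trans ha hs.1.le, le_trans hs.2 hb⟩
    haveI := hfinA _ hsub
    rw [integral_add (integrable_const L0) (((huint (u k) _ measurableSet_Ioc hsub).norm).const_mul _)]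
    have h1 : ∫ _s in Ioc a b, L0 ∂volume = L0 * (b-a) := by
      rw [setIntegral_const, Real.volume_real_Ioc_of_le hab]
      rw [smul_eq_mul, mul_comm]
    have h2 : ∫ s in Ioc a b, ((d:ℝ)*LX) * ‖u k s‖ ∂volume
        ≤ ((d:ℝ)*LX) * (M*(b-a)^(1 - 1/p)) := by
      rw [integral_const_mul]
      refine mul_le_mul_of_nonneg_left ?_ (by positivity)
      refine (hL1 (u k) a b ha hab hb).trans ?_
      exact mul_le_mul_of_nonneg_right (hM k) (Real.rpow_nonneg (by linarith) _)
    linarith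
  -- choice of the subdivision
  set K : ℝ := L0*T + ((d:ℝ)*LX) * (M*T^(1 - 1/p)) with hKdef
  have hK0 : 0 ≤ K := by
    rw [hKdef]
    have : (0:ℝ) ≤ T ^ (1 - 1/p) := Real.rpow_nonneg hT.le _
    positivity
  set c2 : ℝ := (d:ℝ)*LX*M with hc2def
  have hc20 : 0 ≤ c2 := by rw [hc2def]; positivity
  set δ2 : ℝ := (1/(4*(c2+1))) ^ (1 - 1/p)⁻¹ with hδ2def
  have hδ2pos : 0 < δ2 := Real.rpow_pos_of_pos (by positivity) _
  set δ0 : ℝ := min (1/(4*(L0+1))) δ2 with hδ0def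
  have hδ0pos : 0 < δ0 := lt_min (by positivity) hδ2pos
  obtain ⟨N, hNgt⟩ := exists_nat_gt (T/δ0)
  have hTδ : 0 < T/δ0 := by positivity
  have hNpos : 0 < N := by
    rcases Nat.eq_zero_or_pos N with h | h
    · exfalso
      subst h
      rw [Nat.cast_zero] at hNgt
      linarith
    · exact h
  have hN0 : (0:ℝ) < N := by exact_mod_cast hNpos
  have hTN : T/N ≤ δ0 := by
    rw [div_lt_iff₀ hδ0pos] at hNgt
    rw [div_le_iff₀ hN0]
    have h9 := mul_comm (N:ℝ) δ0
    linarith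
  have hsmall : ∀ k, ∀ t₁ t₂ : ℝ, 0 ≤ t₁ → t₂ ≤ T → t₂ - t₁ ≤ T/N →
      ∫ s in Ioc t₁ t₂, (L0 + ((d:ℝ)*LX) * ‖u k s‖) ∂volume ≤ 1/2 := by
    intro k t₁ t₂ h1 h2 h3
    rcases le_or_gt t₂ t₁ with h | h
    · rw [Ioc_eq_empty (not_lt.2 h)]
      simp
    · refine (hgbound k t₁ t₂ h1 h.le h2).trans ?_
      have hd0 : 0 ≤ t₂ - t₁ := by linarith
      have hda : t₂ - t₁ ≤ δ0 := le_trans h3 hTN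
      have hq1 : L0 * (t₂ - t₁) ≤ 1/4 := by
        have : t₂ - t₁ ≤ 1/(4*(L0+1)) := le_trans hda (min_le_left _ _)
        have h4 : L0 * (t₂ - t₁) ≤ L0 * (1/(4*(L0+1))) :=
          mul_le_mul_of_nonneg_left this hL00
        have h5 : L0 * (1/(4*(L0+1))) ≤ 1/4 := by
          rw [mul_one_div, div_le_div_iff₀ (by positivity) (by norm_num)]
          nlinarith
        linarith
      have hq2 : ((d:ℝ)*LX) * (M*(t₂-t₁)^(1 - 1/p)) ≤ 1/4 := by
        have hr1 : (t₂-t₁)^(1 - 1/p) ≤ δ2^(1 - 1/p) :=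
          Real.rpow_le_rpow hd0 (le_trans hda (min_le_right _ _)) he.le
        have hr2 : δ2^(1 - 1/p) = 1/(4*(c2+1)) := by
          rw [hδ2def, Real.rpow_inv_rpow (by positivity) he.ne']
        have hr3 : ((d:ℝ)*LX) * (M*(t₂-t₁)^(1 - 1/p)) ≤ c2 * (1/(4*(c2+1))) := by
          rw [hc2def]
          calc ((d:ℝ)*LX) * (M*(t₂-t₁)^(1 - 1/p)) = ((d:ℝ)*LX*M) * (t₂-t₁)^(1 - 1/p) := by ring
          _ ≤ ((d:ℝ)*LX*M) * (1/(4*(((d:ℝ)*LX*M)+1))) := by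
              rw [← hc2def, ← hr2]
              exact mul_le_mul_of_nonneg_left hr1 hc20
          _ = _ := by rw [← hc2def]
        have hr4 : c2 * (1/(4*(c2+1))) ≤ 1/4 := by
          rw [mul_one_div, div_le_div_iff₀ (by positivity) (by norm_num)]
          nlinarith
        linarith
      linarith
  -- the Gronwall step
  set B : ℝ := (2*K+3)^N with hBdef
  have hB1 : (1:ℝ) ≤ B := by
    rw [hBdef]; exact one_le_pow₀ (by linarith)
  have hBpos : 0 < B := by linarith
  have hGron : ∀ k (a' : ℝ), 0 ≤ a' → (∀ t ∈ Icc (0:ℝ) T, ‖Ih k t‖ ≤ a') →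
      ∀ t ∈ Icc (0:ℝ) T, ‖γ k t - γlim t‖ ≤ a' * B := by
    intro k a' ha' hIk
    refine gronwall_discrete T a' K hT N hNpos
      (fun s => L0 + ((d:ℝ)*LX) * ‖u k s‖) (fun t => ‖γ k t - γlim t‖)
      (((hγc k).sub hγlc).norm) (fun t _ => norm_nonneg _) ha' (hg0 k)
      (hgint k _ measurableSet_Icc (subset_refl _))
      (hgφint k _ measurableSet_Icc (subset_refl _)) ?_ (hsmall k) ?_
    · rw [integral_Icc_eq_integral_Ioc, hKdef]
      have := hgbound k 0 T le_rfl hT.le le_rfl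
      rw [sub_zero] at this
      exact this
    · intro t ht
      refine (hineq k t ht).trans ?_
      have := hIk t ht
      linarith
  -- Hölder continuity of the weak term
  have hIdiff : ∀ k, ∀ t₁ t₂ : ℝ, 0 ≤ t₁ → t₁ ≤ t₂ → t₂ ≤ T →
      ‖Ih k t₂ - Ih k t₁‖ ≤ ((d:ℝ)*CX*(2*M)) * (t₂ - t₁)^(1 - 1/p) := by
    intro k t₁ t₂ h1 h2 h3
    have hsub2 : Ioc (0:ℝ) t₂ ⊆ Icc 0 T := fun s hs => ⟨hs.1.le, hs.2.trans h3⟩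
    have hsub1 : Ioc (0:ℝ) t₁ ⊆ Icc 0 T := fun s hs => ⟨hs.1.le, hs.2.trans (h2.trans h3)⟩
    have hsub12 : Ioc t₁ t₂ ⊆ Icc 0 T := fun s hs => ⟨le_trans h1 hs.1.le, hs.2.trans h3⟩
    have hsplit : Ih k t₂ = Ih k t₁
        + ∫ s in Ioc t₁ t₂, (∑ i, (u k s i - ulim s i) • X i (γlim s)) ∂volume := by
      rw [hIdef]
      simp only
      rw [← setIntegral_union (Ioc_disjoint_Ioc_of_le le_rfl) measurableSet_Ioc
        (hhint k _ measurableSet_Ioc hsub1) (hhint k _ measurableSet_Ioc hsub12),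
        Ioc_union_Ioc_eq_Ioc h1 h2]
    have hptbd : ∀ s : ℝ, ‖∑ i, (u k s i - ulim s i) • X i (γlim s)‖
        ≤ ((d:ℝ)*CX) * (‖u k s‖ + ‖ulim s‖) := by
      intro s
      have h4 : ∀ i : Fin d, u k s i - ulim s i = (u k s - ulim s) i := fun i => rfl
      calc ‖∑ i, (u k s i - ulim s i) • X i (γlim s)‖
          = ‖∑ i, (u k s - ulim s) i • X i (γlim s)‖ := by
            exact congrArg _ (Finset.sum_congr rfl fun i _ => by rw [h4])
      _ ≤ (d:ℝ) * CX * ‖u k s - ulim s‖ :=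
          sum_smul_bound _ _ CX hCX0 (fun i => hCX i _)
      _ ≤ ((d:ℝ)*CX) * (‖u k s‖ + ‖ulim s‖) := by
          exact mul_le_mul_of_nonneg_left (norm_sub_le _ _) (by positivity)
    have hub : IntegrableOn (fun s => ‖u k s‖ + ‖ulim s‖) (Ioc t₁ t₂) volume :=
      ((huint (u k) _ measurableSet_Ioc hsub12).norm).add
        ((huint ulim _ measurableSet_Ioc hsub12).norm)
    calc ‖Ih k t₂ - Ih k t₁‖
        = ‖∫ s in Ioc t₁ t₂, (∑ i, (u k s i - ulim s i) • X i (γlim s)) ∂volume‖ := by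
          rw [hsplit]; congr 1; abel
    _ ≤ ∫ s in Ioc t₁ t₂, ‖∑ i, (u k s i - ulim s i) • X i (γlim s)‖ ∂volume :=
          norm_integral_le_integral_norm _
    _ ≤ ∫ s in Ioc t₁ t₂, ((d:ℝ)*CX) * (‖u k s‖ + ‖ulim s‖) ∂volume := by
          refine setIntegral_mono_on ((hhint k _ measurableSet_Ioc hsub12).norm)
            (hub.const_mul _) measurableSet_Ioc fun s _ => hptbd s
    _ = ((d:ℝ)*CX) * ((∫ s in Ioc t₁ t₂, ‖u k s‖ ∂volume)
          + ∫ s in Ioc t₁ t₂, ‖ulim s‖ ∂volume) := by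
          rw [integral_const_mul, integral_add ((huint (u k) _ measurableSet_Ioc hsub12).norm)
            ((huint ulim _ measurableSet_Ioc hsub12).norm)]
    _ ≤ ((d:ℝ)*CX) * (M*(t₂-t₁)^(1 - 1/p) + M*(t₂-t₁)^(1 - 1/p)) := by
          refine mul_le_mul_of_nonneg_left ?_ (by positivity)
          have hA := (hL1 (u k) t₁ t₂ h1 h2 h3).trans
            (mul_le_mul_of_nonneg_right (hM k) (Real.rpow_nonneg (by linarith) _))
          have hB := (hL1 ulim t₁ t₂ h1 h2 h3).trans
            (mul_le_mul_of_nonneg_right hMl (Real.rpow_nonneg (by linarith) _))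
          linarith
    _ = ((d:ℝ)*CX*(2*M)) * (t₂ - t₁)^(1 - 1/p) := by ring
  -- pointwise convergence of the weak term
  have hpt : ∀ t ∈ Icc (0:ℝ) T, Tendsto (fun k => Ih k t) atTop (𝓝 0) := by
    intro t ht
    have hsub : Ioc (0:ℝ) t ⊆ Icc 0 T := fun s hs => ⟨hs.1.le, hs.2.trans ht.2⟩
    have hcoord : ∀ j : Fin n, Tendsto (fun k => Ih k t j) atTop (𝓝 0) := by
      intro j
      set w0 : ℝ → EuclideanSpace ℝ (Fin d) :=
        fun s => (WithLp.equiv 2 (Fin d → ℝ)).symm (fun i => X i (γlim s) j) with hw0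
      have hw0cont : ContinuousOn w0 (Icc 0 T) := by
        have h1 : Continuous (fun y : EuclideanSpace ℝ (Fin n) =>
            (WithLp.equiv 2 (Fin d → ℝ)).symm (fun i => X i y j)) := by
          refine (PiLp.continuous_toLp _ _).comp (continuous_pi fun i => ?_)
          exact (EuclideanSpace.proj j).continuous.comp (hXsmooth i).continuous
        exact h1.comp_continuousOn hγlc
      set w : ℝ → EuclideanSpace ℝ (Fin d) := (Ioc (0:ℝ) t).indicator w0 with hw
      have hwmeas : AEStronglyMeasurable w (volume.restrict (Set.Icc (0:ℝ) T)) := by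
        rw [hw]
        exact (hw0cont.aestronglyMeasurable measurableSet_Icc).indicator measurableSet_Ioc
      have hwbdd : ∀ s, ‖w s‖ ≤ Real.sqrt d * CX := by
        intro s
        rw [hw]
        by_cases hs : s ∈ Ioc (0:ℝ) t
        · rw [indicator_of_mem hs]
          refine norm_le_sqrt_mul _ CX hCX0 fun i => ?_
          calc |(w0 s) i| = |X i (γlim s) j| := rfl
          _ ≤ ‖X i (γlim s)‖ := coord_le_norm _ j
          _ ≤ CX := hCX i _
        · rw [indicator_of_notMem hs, norm_zero]
          positivity
      obtain ⟨Φ, hΦ⟩ := pairing_clm hp w hwmeas (Real.sqrt d * CX) (by positivity)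
        (ae_of_all _ hwbdd)
      have hkey : ∀ f : Lp (EuclideanSpace ℝ (Fin d)) (ENNReal.ofReal p)
          (volume.restrict (Set.Icc (0:ℝ) T)),
          Φ f = (∫ s in Ioc (0:ℝ) t, (∑ i, f s i • X i (γlim s)) ∂volume) j := by
        intro f
        rw [hΦ f]
        have h1 : ∀ s, (inner ℝ (w s) (f s) : ℝ)
            = (Ioc (0:ℝ) t).indicator (fun s' => ∑ i, f s' i * (X i (γlim s') j)) s := by
          intro s
          rw [hw]
          by_cases hs : s ∈ Ioc (0:ℝ) t
          · rw [indicator_of_mem hs, indicator_of_mem hs, PiLp.inner_apply]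
            refine Finset.sum_congr rfl fun i _ => ?_
            simp only [RCLike.inner_apply, conj_trivial]
            rw [mul_comm]
            exact mul_comm _ _
          · rw [indicator_of_notMem hs, indicator_of_notMem hs, inner_zero_left]
        calc ∫ s, (inner ℝ (w s) (f s) : ℝ) ∂(volume.restrict (Set.Icc (0:ℝ) T))
            = ∫ s, (Ioc (0:ℝ) t).indicator
                (fun s' => ∑ i, f s' i * (X i (γlim s') j)) s
                ∂(volume.restrict (Set.Icc (0:ℝ) T)) :=
              integral_congr_ae (ae_of_all _ h1)
        _ = ∫ s in Ioc (0:ℝ) t, (∑ i, f s i * (X i (γlim s) j))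
              ∂(volume.restrict (Set.Icc (0:ℝ) T)) := integral_indicator measurableSet_Ioc
        _ = ∫ s in Ioc (0:ℝ) t, (∑ i, f s i * (X i (γlim s) j)) ∂volume := by
              rw [hres _ measurableSet_Ioc hsub]
        _ = (∫ s in Ioc (0:ℝ) t, (∑ i, f s i • X i (γlim s)) ∂volume) j := by
              have h2 := (EuclideanSpace.proj j).integral_comp_comm
                (hsumint f γlim hγlc _ measurableSet_Ioc hsub)
              have h3 : (EuclideanSpace.proj j)
                  (∫ s in Ioc (0:ℝ) t, (∑ i, f s i • X i (γlim s)) ∂volume)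
                  = (∫ s in Ioc (0:ℝ) t, (∑ i, f s i • X i (γlim s)) ∂volume) j := rfl
              rw [← h3, ← h2]
              refine integral_congr_ae (ae_of_all _ fun s => ?_)
              simp only [map_sum]
              refine Finset.sum_congr rfl fun i _ => ?_
              rw [ContinuousLinearMap.map_smul]
              rw [smul_eq_mul]
              rfl
      have hIeq : ∀ k, Ih k t j = Φ (u k) - Φ ulim := by
        intro k
        rw [hkey, hkey, hIdef]
        have hsplit : (∫ s in Ioc (0:ℝ) t, (∑ i, (u k s i - ulim s i) • X i (γlim s)) ∂volume)
            = (∫ s in Ioc (0:ℝ) t, (∑ i, u k s i • X i (γlim s)) ∂volume)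
              - ∫ s in Ioc (0:ℝ) t, (∑ i, ulim s i • X i (γlim s)) ∂volume := by
          rw [← integral_sub (hsumint (u k) γlim hγlc _ measurableSet_Ioc hsub)
            (hsumint ulim γlim hγlc _ measurableSet_Ioc hsub)]
          exact integral_congr_ae (ae_of_all _ fun s => hdiffeq k s)
        simp only
        rw [hsplit]
        rfl
      have hlim := (hweak Φ).sub (tendsto_const_nhds (x := Φ ulim))
      rw [sub_self] at hlim
      exact Tendsto.congr (fun k => (hIeq k).symm) hlim
    have hnorm : Tendsto (fun k => ‖Ih k t‖) atTop (𝓝 0) := by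
      have hsq : Tendsto (fun k => ∑ j, ‖Ih k t j‖^2) atTop (𝓝 0) := by
        have h1 : Tendsto (fun k => ∑ j, ‖Ih k t j‖^2) atTop (𝓝 (∑ _j : Fin n, (0:ℝ))) := by
          refine tendsto_finset_sum _ fun j _ => ?_
          have h2 := ((hcoord j).norm).pow 2
          simpa using h2
        simpa using h1
      have heqn : (fun k => ‖Ih k t‖) = fun k => Real.sqrt (∑ j, ‖Ih k t j‖^2) :=
        funext fun k => EuclideanSpace.norm_eq _
      rw [heqn]
      have h3 := (Real.continuous_sqrt.tendsto 0).comp hsq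
      simpa [Function.comp_def] using h3
    exact tendsto_zero_iff_norm_tendsto_zero.mpr hnorm
  -- conclusion
  rw [Metric.tendstoUniformlyOn_iff]
  intro ε hε
  have ha' : 0 < ε/(2*B) := by positivity
  filter_upwards [grid_uniform T hT Ih ((d:ℝ)*CX*(2*M)) (1 - 1/p) (by positivity) he
    hIdiff hpt ha'] with k hk
  intro t ht
  have hfin := hGron k (ε/(2*B)) ha'.le hk t ht
  have hBne : B ≠ 0 := ne_of_gt hBpos
  have hval : ε/(2*B) * B = ε/2 := by
    field_simp
  rw [dist_eq_norm, norm_sub_rev]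
  calc ‖γ k t - γlim t‖ ≤ ε/(2*B) * B := hfin
  _ = ε/2 := hval
  _ < ε := by linarith




end
end

section
/- Fix n, d ∈ ℕ, 1 < p < ∞, T > 0, and suppose u_n converges weakly to u in L^p([0,T], ℝ^d). Let w : [0,T] → ℝ^{m×d} be a continuous matrix-valued function. Then the functions h_n(t) = ∫_0^t w(s)·(u_n(s) − u(s)) ds converge to the zero function uniformly on [0,T]. -/
/-!
By Hölder's inequality, `‖∫ₐᵇ w (u_k - u)‖ ≤ sup ‖w‖ · ‖u_k - u‖_p · |b - a| ^ (1 - 1/p)`, and a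
weakly convergent sequence is norm-bounded by Banach–Steinhaus, so the `h_k` are uniformly Hölder
continuous, hence equicontinuous on `[0, T]`. For fixed `t`, `f ↦ ∫₀ᵗ w f` is a continuous linear
map from `L^p` into a finite-dimensional space, so `h_k t → 0`. On a compact set, pointwise
convergence of an equicontinuous family is uniform.
-/

open MeasureTheory Set Filter Topology ENNReal

section WeakConvergence

variable {𝕜 X : Type*} [RCLike 𝕜] [NormedAddCommGroup X] [NormedSpace 𝕜 X]

theorem exists_forall_norm_le_of_forall_dual_tendsto {x : ℕ → X} {y : X}
    (h : ∀ φ : StrongDual 𝕜 X, Tendsto (fun k => φ (x k)) atTop (𝓝 (φ y))) :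
    ∃ M, ∀ k, ‖x k‖ ≤ M := by
  obtain ⟨M, hM⟩ := banach_steinhaus (g := fun k => NormedSpace.inclusionInDoubleDual 𝕜 X (x k))
    fun φ => let ⟨C, hC⟩ := (h φ).norm.bddAbove_range; ⟨C, fun k => hC (mem_range_self k)⟩
  exact ⟨M, fun k => (NormedSpace.inclusionInDoubleDualLi 𝕜).norm_map (x k) ▸ hM k⟩

theorem tendsto_of_forall_dual_tendsto [FiniteDimensional 𝕜 X] {ι : Type*} {l : Filter ι}
    {x : ι → X} {y : X} (h : ∀ φ : StrongDual 𝕜 X, Tendsto (fun i => φ (x i)) l (𝓝 (φ y))) :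
    Tendsto x l (𝓝 y) := by
  let e := (Module.finBasis 𝕜 X).equivFunL
  exact e.toHomeomorph.isInducing.tendsto_nhds_iff.2 <|
    tendsto_pi_nhds.2 fun i => h ((ContinuousLinearMap.proj i).comp e.toContinuousLinearMap :)

end WeakConvergence

theorem EquicontinuousOn.tendstoUniformlyOn_of_tendsto {ι X α : Type*} [TopologicalSpace X]
    [UniformSpace α] {F : ι → X → α} {f : X → α} {l : Filter ι} {K : Set X}
    (hK : IsCompact K) (hF : EquicontinuousOn F K) (h : ∀ x ∈ K, Tendsto (F · x) l (𝓝 (f x))) :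
    TendstoUniformlyOn F f l K := by
  have := (EquicontinuousOn.tendsto_uniformOnFun_iff_pi' (𝔖 := {K}) (by simpa using hK)
    (by simpa using hF) l f).2 (by
      rw [sUnion_singleton, tendsto_pi_nhds]
      exact fun x => h x x.2)
  exact UniformOnFun.tendsto_iff_tendstoUniformlyOn.1 this K rfl

theorem equicontinuousOn_of_dist_le_mul_rpow {ι X Y : Type*} [PseudoMetricSpace X]
    [PseudoMetricSpace Y] {F : ι → X → Y} {s : Set X} {K α : ℝ} (hα : 0 < α)
    (h : ∀ i, ∀ x ∈ s, ∀ y ∈ s, dist (F i x) (F i y) ≤ K * dist x y ^ α) :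
    EquicontinuousOn F s := by
  rw [← equicontinuous_restrict_iff]
  refine Metric.equicontinuous_of_continuity_modulus (fun r => K * r ^ α) ?_ _
    fun x y i => h i x x.2 y y.2
  simpa [Real.zero_rpow hα.ne'] using
    ((Real.continuousAt_rpow_const 0 α (Or.inr hα.le)).tendsto.const_mul K)

theorem ENNReal.one_sub_one_div_toReal_pos {p : ℝ≥0∞} (hp : 1 < p) : 0 < 1 - 1 / p.toReal := by
  have := ENNReal.toReal_strict_mono one_ne_top (ENNReal.inv_lt_one.2 hp)
  rw [toReal_inv, toReal_one] at this
  linarith [one_div p.toReal]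

/-- For `p = ∞` the exponent is `1`, since then `p.toReal = 0`. -/
theorem setIntegral_norm_le_eLpNorm_mul_measureReal_rpow {α E : Type*} [MeasurableSpace α]
    [NormedAddCommGroup E] {μ : Measure α} {s : Set α} (hs : μ s ≠ ∞) {p : ℝ≥0∞} (hp : 1 ≤ p)
    {f : α → E} (hf : MemLp f p (μ.restrict s)) :
    ∫ x in s, ‖f x‖ ∂μ ≤ (eLpNorm f p (μ.restrict s)).toReal * μ.real s ^ (1 - 1 / p.toReal) := by
  have h := eLpNorm_le_eLpNorm_mul_rpow_measure_univ hp hf.1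
  rw [Measure.restrict_apply_univ, toReal_one, div_one] at h
  have hexp : 0 ≤ 1 - 1 / p.toReal := by
    have := ENNReal.toReal_le_of_le_ofReal zero_le_one
      (by simpa using ENNReal.inv_le_one.2 hp : p⁻¹ ≤ ENNReal.ofReal 1)
    rw [toReal_inv] at this
    linarith [one_div p.toReal]
  rw [integral_norm_eq_lintegral_enorm hf.1, ← eLpNorm_one_eq_lintegral_enorm, measureReal_def,
    toReal_rpow, ← toReal_mul]
  exact toReal_mono (mul_ne_top hf.2.ne (rpow_ne_top_of_nonneg hexp hs)) h

section IntervalIntegral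

variable {E F : Type*} [NormedAddCommGroup E] [NormedSpace ℝ E] [NormedAddCommGroup F]
  [NormedSpace ℝ F] {T : ℝ} {w : ℝ → E →L[ℝ] F} {a b : ℝ}

theorem intervalIntegral_clm_apply_congr_ae {f g : ℝ → E}
    (hfg : f =ᵐ[volume.restrict (Icc 0 T)] g) (ha : a ∈ Icc 0 T) (hb : b ∈ Icc 0 T) :
    ∫ s in a..b, w s (f s) = ∫ s in a..b, w s (g s) := by
  refine intervalIntegral.integral_congr_ae ?_
  filter_upwards [(ae_restrict_iff' measurableSet_Icc).1 hfg] with s hs hsab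
  rw [hs (uIoc_subset_uIcc.trans (uIcc_subset_Icc ha hb) hsab)]

theorem intervalIntegrable_clm_apply (hw : ContinuousOn w (Icc 0 T)) {f : ℝ → E}
    (hf : IntegrableOn f (Icc 0 T)) (ha : a ∈ Icc 0 T) (hb : b ∈ Icc 0 T) :
    IntervalIntegrable (fun s => w s (f s)) volume a b := by
  obtain ⟨C, hC⟩ := isCompact_Icc.exists_bound_of_continuousOn hw
  have hint : IntegrableOn (fun s => w s (f s)) (Icc 0 T) := by
    refine (hf.norm.const_mul C).mono'
      (isBoundedBilinearMap_apply.continuous.comp_aestronglyMeasurable₂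
        (hw.aestronglyMeasurable measurableSet_Icc) hf.1) ?_
    filter_upwards [ae_restrict_mem measurableSet_Icc] with s hs
    exact (w s).le_of_opNorm_le (hC s hs) _
  exact intervalIntegrable_iff.2 (hint.mono_set (uIoc_subset_uIcc.trans (uIcc_subset_Icc ha hb)))

theorem norm_intervalIntegral_clm_apply_le {p : ℝ≥0∞} (hp : 1 ≤ p) {C : ℝ}
    (hC : ∀ s ∈ Icc 0 T, ‖w s‖ ≤ C) {f : ℝ → E} (hf : MemLp f p (volume.restrict (Icc 0 T)))
    (ha : a ∈ Icc 0 T) (hb : b ∈ Icc 0 T) :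
    ‖∫ s in a..b, w s (f s)‖ ≤
      C * (eLpNorm f p (volume.restrict (Icc 0 T))).toReal * |b - a| ^ (1 - 1 / p.toReal) := by
  have hsub : uIoc a b ⊆ Icc 0 T := uIoc_subset_uIcc.trans (uIcc_subset_Icc ha hb)
  have hμ : volume.restrict (uIoc a b) ≤ volume.restrict (Icc 0 T) :=
    Measure.restrict_mono hsub le_rfl
  have hC0 : 0 ≤ C := (norm_nonneg _).trans (hC a ha)
  calc ‖∫ s in a..b, w s (f s)‖
      ≤ ∫ s in uIoc a b, ‖w s (f s)‖ := intervalIntegral.norm_integral_le_integral_norm_uIoc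
    _ ≤ ∫ s in uIoc a b, C * ‖f s‖ := by
      refine integral_mono_of_nonneg (ae_of_all _ fun _ => norm_nonneg _)
        (((hf.integrable hp).mono_measure hμ).norm.const_mul C) ?_
      filter_upwards [ae_restrict_mem measurableSet_uIoc] with s hs
      exact (w s).le_of_opNorm_le (hC s (hsub hs)) _
    _ = C * ∫ s in uIoc a b, ‖f s‖ := integral_const_mul _ _
    _ ≤ C * ((eLpNorm f p (volume.restrict (uIoc a b))).toReal *
          volume.real (uIoc a b) ^ (1 - 1 / p.toReal)) := by
      gcongr
      exact setIntegral_norm_le_eLpNorm_mul_measureReal_rpow (by simp) hp (hf.mono_measure hμ)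
    _ ≤ C * ((eLpNorm f p (volume.restrict (Icc 0 T))).toReal * |b - a| ^ (1 - 1 / p.toReal)) := by
      rw [measureReal_def, Real.volume_uIoc, toReal_ofReal (abs_nonneg _)]
      gcongr
      exact hf.2.ne
    _ = _ := by ring

theorem exists_continuousLinearMap_eq_intervalIntegral_clm_apply {p : ℝ≥0∞} [Fact (1 ≤ p)]
    (hw : ContinuousOn w (Icc 0 T)) {t : ℝ} (ht : t ∈ Icc 0 T) :
    ∃ Φ : Lp E p (volume.restrict (Icc 0 T)) →L[ℝ] F,
      ∀ f, Φ f = ∫ s in (0 : ℝ)..t, w s (f s) := by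
  have h0 : (0 : ℝ) ∈ Icc 0 T := ⟨le_rfl, ht.1.trans ht.2⟩
  have hint (f : Lp E p (volume.restrict (Icc 0 T))) :=
    intervalIntegrable_clm_apply hw ((Lp.memLp f).integrable Fact.out) h0 ht
  obtain ⟨C, hC⟩ := isCompact_Icc.exists_bound_of_continuousOn hw
  refine ⟨LinearMap.mkContinuousOfExistsBound
    { toFun := fun f => ∫ s in (0 : ℝ)..t, w s (f s)
      map_add' := fun f g => ?_
      map_smul' := fun c f => ?_ } ?_, fun _ => rfl⟩
  · rw [intervalIntegral_clm_apply_congr_ae (Lp.coeFn_add f g) h0 ht]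
    simp only [Pi.add_apply, map_add]
    exact intervalIntegral.integral_add (hint f) (hint g)
  · rw [intervalIntegral_clm_apply_congr_ae (Lp.coeFn_smul c f) h0 ht]
    simp only [Pi.smul_apply, map_smul]
    exact intervalIntegral.integral_smul c _
  · refine ⟨C * |t - 0| ^ (1 - 1 / p.toReal), fun f => ?_⟩
    refine (norm_intervalIntegral_clm_apply_le Fact.out hC (Lp.memLp f) h0 ht).trans_eq ?_
    rw [Lp.norm_def]
    ring

theorem tendstoUniformlyOn_intervalIntegral_clm_apply_of_weakly_tendsto_zero
    [FiniteDimensional ℝ F] {p : ℝ≥0∞} [Fact (1 ≤ p)] (hp : 1 < p)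
    (hw : ContinuousOn w (Icc 0 T)) {v : ℕ → Lp E p (volume.restrict (Icc 0 T))}
    (hv : ∀ φ : StrongDual ℝ (Lp E p (volume.restrict (Icc 0 T))),
      Tendsto (fun k => φ (v k)) atTop (𝓝 0)) :
    TendstoUniformlyOn (fun k t => ∫ s in (0 : ℝ)..t, w s (v k s)) (fun _ => 0) atTop
      (Icc 0 T) := by
  obtain ⟨C, hC⟩ := isCompact_Icc.exists_bound_of_continuousOn hw
  obtain ⟨M, hM⟩ :=
    exists_forall_norm_le_of_forall_dual_tendsto (𝕜 := ℝ) (x := v) (y := 0) (by simpa using hv)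
  refine EquicontinuousOn.tendstoUniformlyOn_of_tendsto isCompact_Icc
    (equicontinuousOn_of_dist_le_mul_rpow (K := C * M) (one_sub_one_div_toReal_pos hp) ?_) ?_
  · intro k x hx y hy
    have h0 : (0 : ℝ) ∈ Icc 0 T := ⟨le_rfl, hx.1.trans hx.2⟩
    have hint := fun z (hz : z ∈ Icc 0 T) =>
      intervalIntegrable_clm_apply hw ((Lp.memLp (v k)).integrable Fact.out) h0 hz
    rw [dist_eq_norm, intervalIntegral.integral_interval_sub_left (hint x hx) (hint y hy),
      Real.dist_eq]
    refine (norm_intervalIntegral_clm_apply_le Fact.out hC (Lp.memLp (v k)) hy hx).trans ?_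
    rw [← Lp.norm_def]
    gcongr
    · exact (norm_nonneg _).trans (hC x hx)
    · exact hM k
  · intro t ht
    obtain ⟨Φ, hΦ⟩ := exists_continuousLinearMap_eq_intervalIntegral_clm_apply (p := p) hw ht
    simp only [← hΦ]
    exact tendsto_of_forall_dual_tendsto (𝕜 := ℝ) (y := 0) fun φ => by simpa using hv (φ.comp Φ)

end IntervalIntegral

theorem stmt11_general (m d : ℕ) (p : ℝ) (hp : 1 < p) [Fact (1 ≤ ENNReal.ofReal p)]
    (T : ℝ)
    (u : ℕ → Lp (EuclideanSpace ℝ (Fin d)) (ENNReal.ofReal p)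
      (volume.restrict (Set.Icc (0:ℝ) T)))
    (ulim : Lp (EuclideanSpace ℝ (Fin d)) (ENNReal.ofReal p)
      (volume.restrict (Set.Icc (0:ℝ) T)))
    (hweak : ∀ φ : Lp (EuclideanSpace ℝ (Fin d)) (ENNReal.ofReal p)
        (volume.restrict (Set.Icc (0:ℝ) T)) →L[ℝ] ℝ,
      Tendsto (fun k => φ (u k)) atTop (𝓝 (φ ulim)))
    (w : ℝ → (EuclideanSpace ℝ (Fin d) →L[ℝ] EuclideanSpace ℝ (Fin m)))
    (hw : ContinuousOn w (Set.Icc 0 T)) :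
    TendstoUniformlyOn
      (fun k t => ∫ s in (0:ℝ)..t, w s (u k s - ulim s))
      (fun _ => 0) atTop (Set.Icc 0 T) := by
  have hv (φ : StrongDual ℝ _) : Tendsto (fun k => φ (u k - ulim)) atTop (𝓝 0) := by
    simpa using (hweak φ).sub_const (φ ulim)
  refine (tendstoUniformlyOn_intervalIntegral_clm_apply_of_weakly_tendsto_zero
    (ENNReal.one_lt_ofReal.2 hp) hw hv).congr (Eventually.of_forall fun k t ht => ?_)
  exact intervalIntegral_clm_apply_congr_ae (Lp.coeFn_sub _ _) ⟨le_rfl, ht.1.trans ht.2⟩ ht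

/-- if `u_k ⇀ u` weakly in `L^p([0,T],ℝ^d)` and `w : [0,T] → ℝ^{m×d}`
is continuous (viewed as a continuous family of linear maps `ℝ^d → ℝ^m`), then
`h_k(t) = ∫₀ᵗ w(s)(u_k(s) − u(s)) ds` converges to `0` uniformly on `[0,T]`. -/
theorem stmt11 (m d : ℕ) (p : ℝ) (hp : 1 < p) [Fact (1 ≤ ENNReal.ofReal p)]
    (T : ℝ) (hT : 0 < T)
    (u : ℕ → Lp (EuclideanSpace ℝ (Fin d)) (ENNReal.ofReal p)
      (volume.restrict (Set.Icc (0:ℝ) T)))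
    (ulim : Lp (EuclideanSpace ℝ (Fin d)) (ENNReal.ofReal p)
      (volume.restrict (Set.Icc (0:ℝ) T)))
    (hweak : ∀ φ : Lp (EuclideanSpace ℝ (Fin d)) (ENNReal.ofReal p)
        (volume.restrict (Set.Icc (0:ℝ) T)) →L[ℝ] ℝ,
      Tendsto (fun k => φ (u k)) atTop (𝓝 (φ ulim)))
    (w : ℝ → (EuclideanSpace ℝ (Fin d) →L[ℝ] EuclideanSpace ℝ (Fin m)))
    (hw : ContinuousOn w (Set.Icc 0 T)) :
    TendstoUniformlyOn
      (fun k t => ∫ s in (0:ℝ)..t, w s (u k s - ulim s))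
      (fun _ => 0) atTop (Set.Icc 0 T) :=
  stmt11_general m d p hp T u ulim hweak w hw
end
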